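/- arXiv:math/0001091 — 7 statements merged into one kernel-verified Lean document; each statement's English description precedes it below -/
import Mathlib

section
/- For every ordered tree T with n edges, the area A(T) under the lattice path corresponding to T equals binomial(n+1, 2) minus the sum over all vertices v of T of level(v). -/
/-- Ordered (plane) trees: a root with a list of subtrees. -/
inductive OTree : Type where
  | node : List OTree → OTree

namespace OTree

/-- Number of edges of an ordered tree. -/
def edges : OTree → ℕ
  | node [] => 0
  | node (t :: ts) => edges t + 1 + edges (node ts)

/-- Multiset of levels (distances from the root) of the nonroot vertices. -/
def levels : OTree → Multiset ℕ
  | node [] => 0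
  | node (t :: ts) => ((1 : ℕ) ::ₘ (levels t).map (· + 1)) + levels (node ts)

/-- Sum of the levels of all vertices (the root contributes 0). -/
def levelsSum (t : OTree) : ℕ := t.levels.sum

/-- The permutation word of a tree, entries shifted up by `k`: nonroot
vertices are labeled `k+n, …, k+1` in preorder and read in postorder. -/
def wordFrom : OTree → ℕ → List ℕ
  | node [], _ => []
  | node (t :: ts), k =>
      wordFrom t (k + edges (node ts)) ++
        (k + edges (node (t :: ts))) :: wordFrom (node ts) k

/-- The permutation `π(T)` of an ordered tree, as a word on `1, …, n`. -/
def word (t : OTree) : List ℕ := wordFrom t 0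

/-- The lattice-path word of a tree via preorder traversal:
`true` = east step (down an edge), `false` = north step (up an edge). -/
def pathWord : OTree → List Bool
  | node [] => []
  | node (t :: ts) => true :: (pathWord t ++ false :: pathWord (node ts))

/-- The subtree rooted at the vertex reached by the child-index path `p`. -/
def subtreeAt? : OTree → List ℕ → Option OTree
  | t, [] => some t
  | node [], _ :: _ => none
  | node (t :: _), 0 :: p => subtreeAt? t p
  | node (_ :: ts), (i + 1) :: p => subtreeAt? (node ts) (i :: p)

/-- The list of child-index paths to the nonroot vertices, in preorder. -/
def paths : OTree → List (List ℕ)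
  | node [] => []
  | node (t :: ts) =>
      ([0] :: (paths t).map (0 :: ·)) ++
        (paths (node ts)).map (fun p => match p with
          | i :: q => (i + 1) :: q
          | [] => [])

/-- The preorder label of the nonroot vertex at path `p` (labels `n, …, 1`). -/
def labelOf (t : OTree) (p : List ℕ) : ℕ := t.edges - t.paths.idxOf p

end OTree

/-- Area under a lattice path word (`true` = east, `false` = north):
the sum over east steps of the number of north steps preceding them. -/
def pathArea : List Bool → ℕ
  | [] => 0
  | true :: w => pathArea w
  | false :: w => pathArea w + w.count true

/-- A word avoids the pattern 132. -/
def Avoids132W (w : List ℕ) : Prop :=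
  ¬ ∃ i j k : ℕ, i < j ∧ j < k ∧ k < w.length ∧
      w.getD i 0 < w.getD k 0 ∧ w.getD k 0 < w.getD j 0

/-- Number of increasing patterns of length `k` in a word: index sets on
which the word is strictly increasing. -/
def incCountW (w : List ℕ) (k : ℕ) : ℕ :=
  ((Finset.univ : Finset (Finset (Fin w.length))).filter
    (fun S => S.card = k ∧ ∀ i ∈ S, ∀ j ∈ S, i < j → w.get i < w.get j)).card

/-- A permutation of `Fin n` avoids the pattern 132. -/
def Avoids132P {n : ℕ} (π : Equiv.Perm (Fin n)) : Prop :=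
  ¬ ∃ i j k : Fin n, i < j ∧ j < k ∧ π i < π k ∧ π k < π j

/-- Number of increasing patterns of length `k` in a permutation of `Fin n`. -/
def incCountP {n : ℕ} (π : Equiv.Perm (Fin n)) (k : ℕ) : ℕ :=
  ((Finset.univ : Finset (Finset (Fin n))).filter
    (fun S => S.card = k ∧ ∀ i ∈ S, ∀ j ∈ S, i < j → π i < π j)).card

/-- A subdiagonal lattice path from `(0,0)` to `(n,n)`, as a sequence of
`2n` steps (`true` = east, `false` = north) with `n` east steps such that
every prefix has at least as many east steps as north steps. -/
def IsSubdiagPath (n : ℕ) (f : Fin (2 * n) → Bool) : Prop :=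
  (Finset.univ.filter fun i => f i = true).card = n ∧
    ∀ m : ℕ, (Finset.univ.filter fun i : Fin (2 * n) => i.1 < m ∧ f i = false).card ≤
      (Finset.univ.filter fun i : Fin (2 * n) => i.1 < m ∧ f i = true).card

/-- Area under a subdiagonal lattice path given as a step sequence. -/
def pathAreaF {n : ℕ} (f : Fin (2 * n) → Bool) : ℕ :=
  ∑ i ∈ Finset.univ.filter (fun i => f i = true),
    (Finset.univ.filter fun j : Fin (2 * n) => j < i ∧ f j = false).card

lemma pathArea_append (w1 w2 : List Bool) :
    pathArea (w1 ++ w2) = pathArea w1 + pathArea w2 + w1.count false * w2.count true := by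
  induction w1 with
  | nil => simp [pathArea]
  | cons b w ih =>
    cases b <;>
      simp [pathArea, ih, List.count_cons, List.count_append] <;> ring

lemma two_mul_choose (n : ℕ) : 2 * (n + 1).choose 2 = n * (n + 1) := by
  induction n with
  | zero => simp
  | succ n ih =>
    rw [show n + 1 + 1 = (n + 1) + 1 from rfl, Nat.choose_succ_succ,
      Nat.choose_one_right]
    nlinarith [ih]

lemma ch_add (a b : ℕ) :
    (a + 1).choose 2 + (b + 1).choose 2 + (a * b + a + b + 1)
      = (a + b + 1 + 1).choose 2 := by
  have h1 := two_mul_choose a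
  have h2 := two_mul_choose b
  have h3 := two_mul_choose (a + b + 1)
  apply Nat.eq_of_mul_eq_mul_left (show 0 < 2 by norm_num)
  nlinarith [h1, h2, h3]

lemma key : ∀ n : ℕ, ∀ t : OTree, t.edges ≤ n →
    t.pathWord.count true = t.edges ∧ t.pathWord.count false = t.edges ∧
    Multiset.card t.levels = t.edges ∧
    pathArea t.pathWord + t.levelsSum = (t.edges + 1).choose 2 := by
  intro n
  induction n with
  | zero =>
    rintro ⟨l⟩ h
    cases l with
    | nil => simp [OTree.pathWord, OTree.edges, OTree.levelsSum, OTree.levels, pathArea]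
    | cons t ts => simp [OTree.edges] at h
  | succ n ih =>
    rintro ⟨l⟩ h
    cases l with
    | nil => simp [OTree.pathWord, OTree.edges, OTree.levelsSum, OTree.levels, pathArea]
    | cons t ts =>
      simp only [OTree.edges] at h ⊢
      obtain ⟨c1, c1', d1, a1⟩ := ih t (by omega)
      obtain ⟨c2, c2', d2, a2⟩ := ih (OTree.node ts) (by omega)
      simp only [OTree.pathWord, OTree.levelsSum, OTree.levels] at *
      constructor
      · simp [List.count_cons, List.count_append, c1, c2]
        omega
      constructor
      · simp [List.count_cons, List.count_append, c1', c2']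
        omega
      constructor
      · simp [d1, d2]
        omega
      · rw [pathArea]
        rw [pathArea_append]
        rw [show pathArea (false :: (OTree.node ts).pathWord)
            = pathArea (OTree.node ts).pathWord + (OTree.node ts).pathWord.count true
          from rfl]
        have hcnt : (false :: (OTree.node ts).pathWord).count true
            = (OTree.node ts).pathWord.count true := by
          simp [List.count_cons]
        rw [hcnt, c1', c2]
        have hsum : ((1 ::ₘ Multiset.map (· + 1) t.levels) + (OTree.node ts).levels).sum
            = 1 + (t.levels.sum + Multiset.card t.levels) + (OTree.node ts).levels.sum := by
          simp [Multiset.sum_cons]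
          omega
        rw [hsum, d1]
        have := ch_add t.edges (OTree.node ts).edges
        set e1 := t.edges
        set e2 := (OTree.node ts).edges
        set A1 := pathArea t.pathWord
        set A2 := pathArea (OTree.node ts).pathWord
        set L1 := t.levels.sum
        set L2 := (OTree.node ts).levels.sum
        have ha1 : A1 + L1 = (e1 + 1).choose 2 := a1
        have ha2 : A2 + L2 = (e2 + 1).choose 2 := a2
        rw [show e1 + 1 + e2 + 1 = e1 + e2 + 1 + 1 by ring]
        omega

/-- For every ordered tree `T` with `n` edges, the area `A(T)`
under the corresponding lattice path equals `C(n+1, 2)` minus the sum of the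
levels of all vertices of `T`. -/
theorem stmt2 (T : OTree) :
    pathArea T.pathWord = (T.edges + 1).choose 2 - T.levelsSum ∧
    pathArea T.pathWord + T.levelsSum = (T.edges + 1).choose 2 := by
  obtain ⟨-, -, -, h⟩ := key T.edges T le_rfl
  exact ⟨by omega, h⟩
end

section
/- Let T be an ordered tree with n edges whose root has subtrees T_1,...,T_s with n_1,...,n_s edges. Set N_0 = n and N_k = N_{k-1} - n_k - 1 for k = 1,...,s. Then the permutation π(T) equals the concatenation π(T_1, N_1) ∧ N_0 ∧ π(T_2, N_2) ∧ N_1 ∧ ... ∧ π(T_s, N_s) ∧ N_{s-1}. -/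
/-- The concatenation `π(T₁,N₁) ∧ N₀ ∧ π(T₂,N₂) ∧ N₁ ∧ … ∧ π(T_s,N_s) ∧ N_{s-1}`
built from the subtrees `T₁,…,T_s` and `N₀ = n`, `N_k = N_{k-1} - n_k - 1`,
where `π(T,k)` is `π(T)` with all entries increased by `k`. -/
def buildWord : List OTree → ℕ → List ℕ
  | [], _ => []
  | t :: ts, N0 =>
      (t.word.map (· + (N0 - t.edges - 1))) ++ N0 :: buildWord ts (N0 - t.edges - 1)

lemma OTree.wordFrom_shift : ∀ (t : OTree) (k : ℕ),
    OTree.wordFrom t k = (OTree.wordFrom t 0).map (· + k)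
  | .node [], _ => by simp [OTree.wordFrom]
  | .node (t :: ts), k => by
    rw [OTree.wordFrom, OTree.wordFrom,
      OTree.wordFrom_shift t (k + OTree.edges (.node ts)),
      OTree.wordFrom_shift t (0 + OTree.edges (.node ts)),
      OTree.wordFrom_shift (.node ts) k]
    simp [List.map_map, Function.comp, Nat.add_comm]
    intro a _
    omega

/-- If `T` has subtrees `T₁,…,T_s`, then
`π(T) = π(T₁,N₁) ∧ N₀ ∧ π(T₂,N₂) ∧ N₁ ∧ … ∧ π(T_s,N_s) ∧ N_{s-1}`. -/
theorem stmt6 (ts : List OTree) :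
    (OTree.node ts).word = buildWord ts (OTree.node ts).edges := by
  induction ts with
  | nil => simp [OTree.word, OTree.wordFrom, buildWord]
  | cons t ts ih =>
    have he : (OTree.node (t :: ts)).edges - t.edges - 1 = (OTree.node ts).edges := by
      simp [OTree.edges]
      omega
    rw [OTree.word, OTree.wordFrom, buildWord, he, ← ih, Nat.zero_add, Nat.zero_add,
      OTree.wordFrom_shift t]
    simp [OTree.word]
end

section
/- The map T ↦ π(T) from ordered trees with n edges to permutations of {1,...,n} is injective. -/
namespace OTree

theorem length_wordFrom : ∀ (t : OTree) (k : ℕ), (wordFrom t k).length = edges t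
  | node [], _ => by simp [wordFrom, edges]
  | node (t :: ts), k => by
    simp only [wordFrom, edges, List.length_append, List.length_cons,
      length_wordFrom t _, length_wordFrom (node ts) k]
    omega

theorem mem_wordFrom : ∀ (t : OTree) (k x : ℕ), x ∈ wordFrom t k → x ≤ k + edges t
  | node [], _, _, h => by simp [wordFrom] at h
  | node (t :: ts), k, x, h => by
    simp only [wordFrom, List.mem_append, List.mem_cons] at h
    rcases h with h | h | h
    · have := mem_wordFrom t _ x h
      simp only [edges] at this ⊢
      omega
    · simp only [edges] at h ⊢
      omega
    · have := mem_wordFrom (node ts) k x h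
      simp only [edges] at this ⊢
      omega

theorem edges_eq_zero : ∀ (t : OTree), edges t = 0 → t = node []
  | node [], _ => rfl
  | node (t :: ts), h => by simp [edges] at h

theorem wordFrom_injAux : ∀ (N : ℕ) (t1 t2 : OTree) (k : ℕ), edges t1 ≤ N →
    wordFrom t1 k = wordFrom t2 k → t1 = t2 := by
  intro N
  induction N with
  | zero =>
    intro t1 t2 k h1 heq
    have e1 : edges t1 = 0 := Nat.le_zero.mp h1
    have e2 : edges t2 = 0 := by
      have := congrArg List.length heq
      rwa [length_wordFrom, length_wordFrom, e1, eq_comm] at this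
    rw [edges_eq_zero t1 e1, edges_eq_zero t2 e2]
  | succ N ih =>
    intro t1 t2 k h1 heq
    have hlen : edges t1 = edges t2 := by
      have := congrArg List.length heq
      rwa [length_wordFrom, length_wordFrom] at this
    match t1, t2 with
    | node [], node [] => rfl
    | node [], node (b :: bs) => simp only [edges] at hlen; omega
    | node (a :: as), node [] => simp only [edges] at hlen; omega
    | node (a :: as), node (b :: bs) =>
      simp only [wordFrom] at heq
      -- the maximal element k + edges is at index (edges a) and (edges b)
      have hE : edges (node (a :: as)) = edges (node (b :: bs)) := hlen
      set m := k + edges (node (a :: as)) with hm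
      have hm2 : k + edges (node (b :: bs)) = m := by rw [hm, hE]
      rw [hm2] at heq
      have hnotA1 : m ∉ wordFrom a (k + edges (node as)) := by
        intro hmem
        have := mem_wordFrom _ _ _ hmem
        simp only [edges] at hm
        omega
      have hnotA2 : m ∉ wordFrom b (k + edges (node bs)) := by
        intro hmem
        have := mem_wordFrom _ _ _ hmem
        simp only [edges] at hm hE
        omega
      have hidx : (wordFrom a (k + edges (node as))).length
          = (wordFrom b (k + edges (node bs))).length := by
        have h1 := List.idxOf_append_of_notMem (l₂ := m :: wordFrom (node as) k) hnotA1
        have h2 := List.idxOf_append_of_notMem (l₂ := m :: wordFrom (node bs) k) hnotA2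
        rw [heq, h2] at h1
        simp at h1
        omega
      obtain ⟨hA, hB⟩ := List.append_inj heq hidx
      have hBtail : wordFrom (node as) k = wordFrom (node bs) k := by
        simpa using hB
      have has : edges (node as) = edges (node bs) := by
        have := congrArg List.length hBtail
        rwa [length_wordFrom, length_wordFrom] at this
      have hea : edges a ≤ N := by simp only [edges] at h1; omega
      have heas : edges (node as) ≤ N := by simp only [edges] at h1; omega
      have h1' : a = b := by
        apply ih a b (k + edges (node as)) hea
        rwa [← has] at hA
      have h2' : node as = node bs := ih _ _ k heas hBtail
      cases h2'
      rw [h1']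

end OTree

/-- The map `T ↦ π(T)` from ordered trees with `n` edges to
permutations of `{1,…,n}` is injective. -/
theorem stmt7 (n : ℕ) : Set.InjOn OTree.word {T : OTree | T.edges = n} := by
  intro T1 _ T2 _ h
  exact OTree.wordFrom_injAux T1.edges T1 T2 0 le_rfl h
end

section
/- For every ordered tree T, the permutation π(T) avoids the pattern 132; that is, there do not exist indices i < j < k with π(T)(i) < π(T)(k) < π(T)(j). -/
lemma mem_wordFrom_bound : ∀ n (t : OTree), t.edges = n →
    ∀ k x, x ∈ OTree.wordFrom t k → k < x ∧ x ≤ k + t.edges := by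
  intro n
  induction n using Nat.strong_induction_on with
  | _ n IH =>
    rintro ⟨ts⟩ hn k x hx
    cases ts with
    | nil => simp [OTree.wordFrom] at hx
    | cons t ts =>
      rw [OTree.wordFrom] at hx
      have hedges : OTree.edges (.node (t :: ts)) = t.edges + 1 + OTree.edges (.node ts) := by
        simp [OTree.edges]
      rw [hedges] at hn
      rcases List.mem_append.1 hx with h | h
      · have := IH t.edges (by omega) t rfl _ x h
        rw [hedges]; omega
      · rcases List.mem_cons.1 h with h | h
        · rw [hedges]; omega
        · have := IH (OTree.edges (.node ts)) (by omega) (.node ts) rfl _ x h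
          rw [hedges]; omega

lemma avoid_glue (A B : List ℕ) (m : ℕ) (hA : Avoids132W A) (hB : Avoids132W B)
    (hAm : ∀ a ∈ A, a < m) (hBm : ∀ b ∈ B, b < m) (hBA : ∀ b ∈ B, ∀ a ∈ A, b < a) :
    Avoids132W (A ++ m :: B) := by
  rintro ⟨i, j, k, hij, hjk, hk, h1, h2⟩
  set la := A.length with hla
  set w := A ++ m :: B with hw
  have hwlen : w.length = la + 1 + B.length := by simp [hw]; omega
  have hlt : ∀ idx, idx < la → w.getD idx 0 = A.getD idx 0 := by
    intro idx h; rw [hw]; exact List.getD_append _ _ _ _ h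
  have hmemA : ∀ idx, idx < la → w.getD idx 0 ∈ A := by
    intro idx h
    rw [hlt idx h, List.getD_eq_getElem _ _ h]
    exact List.getElem_mem h
  have heq : w.getD la 0 = m := by
    have : (m :: B).getD 0 0 = m := rfl
    rw [hw, List.getD_append_right _ _ _ _ (le_refl la)]
    simp [hla]
  have hgt : ∀ idx, la < idx → idx < w.length →
      w.getD idx 0 = B.getD (idx - la - 1) 0 ∧ idx - la - 1 < B.length := by
    intro idx h1' h2'
    constructor
    · rw [hw, List.getD_append_right _ _ _ _ (by omega : A.length ≤ idx)]
      have : idx - A.length = (idx - la - 1) + 1 := by omega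
      rw [this]; rfl
    · omega
  have hmemB : ∀ idx, la < idx → idx < w.length → w.getD idx 0 ∈ B := by
    intro idx ha hb
    obtain ⟨he, hl⟩ := hgt idx ha hb
    rw [he, List.getD_eq_getElem _ _ hl]
    exact List.getElem_mem hl
  rcases Nat.lt_trichotomy k la with hk1 | hk1 | hk1
  · -- all in A
    refine hA ⟨i, j, k, hij, hjk, by omega, ?_, ?_⟩
    · rw [← hlt i (by omega), ← hlt k (by omega)]; exact h1
    · rw [← hlt k (by omega), ← hlt j (by omega)]; exact h2
  · -- k = la : w.getD k 0 = m, but w.getD j 0 ∈ A < m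
    have hj : j < la := by omega
    have := hAm _ (hmemA j hj)
    rw [hk1, heq] at h2; omega
  · -- k > la
    rcases Nat.lt_trichotomy j la with hj1 | hj1 | hj1
    · -- i, j in A, k in B: w i ∈ A > w k
      have := hBA _ (hmemB k hk1 hk) _ (hmemA i (by omega))
      omega
    · -- j = la : i in A, k in B : w i > w k
      have := hBA _ (hmemB k hk1 hk) _ (hmemA i (by omega))
      omega
    · -- j > la, so j, k in B
      rcases Nat.lt_trichotomy i la with hi1 | hi1 | hi1
      · have := hBA _ (hmemB k hk1 hk) _ (hmemA i hi1); omega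
      · -- i = la : w i = m > everything in B
        have := hBm _ (hmemB k hk1 hk)
        rw [hi1, heq] at h1; omega
      · -- all in B
        obtain ⟨hei, _⟩ := hgt i hi1 (by omega)
        obtain ⟨hej, _⟩ := hgt j hj1 (by omega)
        obtain ⟨hek, hlk⟩ := hgt k hk1 hk
        refine hB ⟨i - la - 1, j - la - 1, k - la - 1, by omega, by omega, hlk, ?_, ?_⟩
        · rw [← hei, ← hek]; exact h1
        · rw [← hek, ← hej]; exact h2

lemma wordFrom_avoids : ∀ n (t : OTree), t.edges = n → ∀ k, Avoids132W (OTree.wordFrom t k) := by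
  intro n
  induction n using Nat.strong_induction_on with
  | _ n IH =>
    rintro ⟨ts⟩ hn k
    cases ts with
    | nil =>
      rintro ⟨i, j, k', _, _, hk, _⟩
      simp [OTree.wordFrom] at hk
    | cons t ts =>
      rw [OTree.wordFrom]
      have hedges : OTree.edges (.node (t :: ts)) = t.edges + 1 + OTree.edges (.node ts) := by
        simp [OTree.edges]
      rw [hedges] at hn
      apply avoid_glue
      · exact IH t.edges (by omega) t rfl _
      · exact IH (OTree.edges (.node ts)) (by omega) (.node ts) rfl _
      · intro a ha
        have := mem_wordFrom_bound t.edges t rfl _ a ha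
        rw [hedges]; omega
      · intro b hb
        have := mem_wordFrom_bound (OTree.edges (.node ts)) (.node ts) rfl _ b hb
        rw [hedges]; omega
      · intro b hb a ha
        have h1 := mem_wordFrom_bound (OTree.edges (.node ts)) (.node ts) rfl _ b hb
        have h2 := mem_wordFrom_bound t.edges t rfl _ a ha
        omega

/-- For every ordered tree `T`, the permutation `π(T)` avoids the
pattern 132: there are no indices `i < j < k` with `π(i) < π(k) < π(j)`. -/
theorem stmt8 (T : OTree) : Avoids132W T.word := by
  exact wordFrom_avoids T.edges T rfl 0
end

section
/- For every ordered tree T and every k ≥ 1, the number of increasing patterns of length k in the permutation π(T) equals sum over nonroot vertices v of T of binomial(level(v) - 1, k - 1). -/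


def cntG : ℕ → List ℕ → ℕ → ℕ
  | _, _, 0 => 1
  | _, [], _+1 => 0
  | lo, x :: w, k+1 => cntG lo w (k+1) + if lo < x then cntG x w k else 0

@[simp] lemma cntG_zero (lo : ℕ) (w : List ℕ) : cntG lo w 0 = 1 := by
  cases w <;> rfl

@[simp] lemma cntG_nil (lo k : ℕ) : cntG lo [] (k+1) = 0 := rfl

@[simp] lemma cntG_cons (lo x : ℕ) (w : List ℕ) (k : ℕ) :
    cntG lo (x :: w) (k+1) = cntG lo w (k+1) + if lo < x then cntG x w k else 0 := rfl

lemma cntG_eq_zero (lo : ℕ) (w : List ℕ) (k : ℕ) (h : ∀ y ∈ w, ¬ lo < y) :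
    cntG lo w (k+1) = 0 := by
  induction w with
  | nil => rfl
  | cons x w ih =>
      simp only [cntG_cons]
      rw [ih (fun y hy => h y (List.mem_cons_of_mem _ hy)), if_neg (h x (List.mem_cons_self))]

lemma cntG_append (A : List ℕ) (B : List ℕ) (m lo k : ℕ)
    (hA : ∀ a ∈ A, a < m) (hB : ∀ b ∈ B, b < m) (hAB : ∀ a ∈ A, ∀ b ∈ B, b < a) :
    cntG lo (A ++ m :: B) (k+1) =
      cntG lo A (k+1) + (if lo < m then cntG lo A k else 0) + cntG lo B (k+1) := by
  induction A generalizing lo k with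
  | nil =>
      simp only [List.nil_append, cntG_cons, cntG_nil]
      have : ∀ j, cntG m B j = cntG lo ([] : List ℕ) j := by
        intro j
        cases j with
        | zero => simp
        | succ j => rw [cntG_eq_zero m B j (fun y hy => by have := hB y hy; omega), cntG_nil]
      rw [this k]
      split_ifs <;> omega
  | cons a A ih =>
      have haM : a < m := hA a (List.mem_cons_self)
      have hA' : ∀ x ∈ A, x < m := fun x hx => hA x (List.mem_cons_of_mem _ hx)
      have hAB' : ∀ x ∈ A, ∀ b ∈ B, b < x := fun x hx => hAB x (List.mem_cons_of_mem _ hx)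
      have haB : ∀ b ∈ B, b < a := hAB a (List.mem_cons_self)
      simp only [List.cons_append, cntG_cons]
      rw [ih lo k hA' hAB']
      cases k with
      | zero =>
          simp only [cntG_zero]
          split_ifs <;> omega
      | succ k' =>
          rw [show cntG a (A ++ m :: B) (k'+1) = cntG a A (k'+1) + (if a < m then cntG a A k' else 0) + cntG a B (k'+1) from ih a k' hA' hAB']
          rw [cntG_eq_zero a B k' (fun y hy => by have := haB y hy; omega), if_pos haM]
          simp only [cntG_cons]
          by_cases h1 : lo < a
          · have h2 : lo < m := by omega
            rw [if_pos h1, if_pos h2, if_pos h1, if_pos h2, if_pos h1]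
            ring
          · rw [if_neg h1, if_neg h1]
            split_ifs with h2 <;> omega

def cntQ (lo : ℕ) (w : List ℕ) (k : ℕ) : ℕ :=
  ((Finset.univ : Finset (Finset (Fin w.length))).filter
    (fun S => S.card = k ∧ (∀ i ∈ S, ∀ j ∈ S, i < j → w.get i < w.get j) ∧
      ∀ i ∈ S, lo < w.get i)).card

/-- subsets of `Fin (n+1)` correspond to a flag plus a subset of `Fin n`. -/
noncomputable def finsetSuccEquiv (n : ℕ) : Bool × Finset (Fin n) ≃ Finset (Fin (n + 1)) where
  toFun p := if p.1 then insert 0 (p.2.map (Fin.succEmb n)) else p.2.map (Fin.succEmb n)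
  invFun S := (decide ((0 : Fin (n+1)) ∈ S),
    S.preimage Fin.succ (Fin.succ_injective n).injOn)
  left_inv := by
    rintro ⟨b, T⟩
    have hpre : ∀ (S : Finset (Fin (n+1))) (h),
        (S.preimage Fin.succ h : Finset (Fin n)) = Finset.univ.filter (fun i => i.succ ∈ S) := by
      intro S h; ext i; simp [Finset.mem_preimage]
    cases b <;>
    · ext1 <;> simp [Finset.mem_preimage, Fin.succ_ne_zero, Finset.ext_iff,
        Fin.succ_injective n |>.eq_iff]
  right_inv := by
    intro S
    by_cases h0 : (0 : Fin (n+1)) ∈ S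
    · simp only []
      rw [if_pos (by simpa using h0)]
      ext j
      cases j using Fin.cases with
      | zero => simp [h0]
      | succ i => simp [Finset.mem_preimage, Fin.succ_ne_zero,
          (Fin.succ_injective n).eq_iff]
    · simp only []
      rw [if_neg (by simpa using h0)]
      ext j
      cases j using Fin.cases with
      | zero =>
          simp only [Finset.mem_map, Finset.mem_preimage]
          constructor
          · rintro ⟨i, hi, hie⟩; exact absurd hie (Fin.succ_ne_zero i)
          · intro h; exact absurd h h0
      | succ i => simp [Finset.mem_preimage, (Fin.succ_injective n).eq_iff]

lemma card_filter_finset_succ {n : ℕ} (p : Finset (Fin (n+1)) → Prop) [DecidablePred p] :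
    ((Finset.univ : Finset (Finset (Fin (n+1)))).filter p).card =
      ((Finset.univ : Finset (Finset (Fin n))).filter
        (fun T => p (T.map (Fin.succEmb n)))).card +
      ((Finset.univ : Finset (Finset (Fin n))).filter
        (fun T => p (insert 0 (T.map (Fin.succEmb n))))).card := by
  classical
  rw [Finset.card_filter, Finset.card_filter, Finset.card_filter]
  rw [← Equiv.sum_comp (finsetSuccEquiv n) (fun S => if p S then 1 else 0)]
  rw [Fintype.sum_prod_type]
  rw [Fintype.sum_bool]
  simp only [finsetSuccEquiv, Equiv.coe_fn_mk]
  norm_num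
  omega

lemma cntQ_zero (lo : ℕ) (w : List ℕ) : cntQ lo w 0 = 1 := by
  classical
  unfold cntQ
  rw [Finset.card_eq_one]
  refine ⟨∅, ?_⟩
  ext S
  simp only [Finset.mem_filter, Finset.mem_univ, true_and, Finset.mem_singleton,
    Finset.card_eq_zero]
  constructor
  · rintro ⟨h, -⟩; exact h
  · rintro rfl; simp

lemma cntQ_nil (lo k : ℕ) : cntQ lo [] (k+1) = 0 := by
  classical
  unfold cntQ
  rw [Finset.card_eq_zero]
  apply Finset.filter_false_of_mem
  intro S _
  rintro ⟨hc, -⟩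
  have hle := Finset.card_le_univ S
  have : Fintype.card (Fin ([] : List ℕ).length) = 0 := by simp
  omega

lemma cntQ_succ (lo x : ℕ) (w : List ℕ) (k : ℕ) :
    cntQ lo (x :: w) (k+1) = cntQ lo w (k+1) + if lo < x then cntQ x w k else 0 := by
  classical
  unfold cntQ
  have h := card_filter_finset_succ (n := w.length)
    (p := fun S : Finset (Fin (w.length+1)) => S.card = k + 1 ∧
      (∀ i ∈ S, ∀ j ∈ S, i < j → (x :: w).get i < (x :: w).get j) ∧
      ∀ i ∈ S, lo < (x :: w).get i)
  refine h.trans ?_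
  congr 1
  · -- sets not containing position 0
    congr 1
    apply Finset.filter_congr
    intro T _
    constructor
    · rintro ⟨hc, hinc, hbd⟩
      refine ⟨by simpa using hc, ?_, ?_⟩
      · intro i hi j hj hij
        have := hinc i.succ (Finset.mem_map.2 ⟨i, hi, rfl⟩)
          j.succ (Finset.mem_map.2 ⟨j, hj, rfl⟩) (by simpa using hij)
        simpa [List.get_cons_succ'] using this
      · intro i hi
        have := hbd i.succ (Finset.mem_map.2 ⟨i, hi, rfl⟩)
        simpa [List.get_cons_succ'] using this
    · rintro ⟨hc, hinc, hbd⟩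
      refine ⟨by simpa using hc, ?_, ?_⟩
      · intro i hi j hj hij
        simp only [Finset.mem_map, Fin.coe_succEmb] at hi hj
        obtain ⟨i', hi', rfl⟩ := hi
        obtain ⟨j', hj', rfl⟩ := hj
        have hlt : i' < j' := Fin.succ_lt_succ_iff.mp hij
        have := hinc i' hi' j' hj' hlt
        simpa [List.get_cons_succ'] using this
      · intro i hi
        simp only [Finset.mem_map, Fin.coe_succEmb] at hi
        obtain ⟨i', hi', rfl⟩ := hi
        have := hbd i' hi'
        simpa [List.get_cons_succ'] using this
  · -- sets containing position 0
    have key : ∀ T : Finset (Fin w.length),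
        ((insert 0 (T.map (Fin.succEmb w.length))).card = k + 1 ∧
          (∀ i ∈ insert 0 (T.map (Fin.succEmb w.length)),
            ∀ j ∈ insert 0 (T.map (Fin.succEmb w.length)), i < j →
              (x :: w).get i < (x :: w).get j) ∧
          ∀ i ∈ insert 0 (T.map (Fin.succEmb w.length)), lo < (x :: w).get i)
        ↔ (lo < x ∧ (T.card = k ∧ (∀ i ∈ T, ∀ j ∈ T, i < j → w.get i < w.get j) ∧
            ∀ i ∈ T, x < w.get i)) := by
      intro T
      have h0m : (0 : Fin (w.length+1)) ∉ T.map (Fin.succEmb w.length) := by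
        simp only [Finset.mem_map, Fin.coe_succEmb]
        rintro ⟨i, -, hie⟩
        exact Fin.succ_ne_zero i hie
      have hcard : (insert 0 (T.map (Fin.succEmb w.length))).card = T.card + 1 := by
        rw [Finset.card_insert_of_notMem h0m, Finset.card_map]
      constructor
      · rintro ⟨hc, hinc, hbd⟩
        refine ⟨?_, by omega, ?_, ?_⟩
        · have := hbd 0 (Finset.mem_insert_self _ _)
          simpa using this
        · intro i hi j hj hij
          have := hinc i.succ (Finset.mem_insert_of_mem (Finset.mem_map.2 ⟨i, hi, rfl⟩))
            j.succ (Finset.mem_insert_of_mem (Finset.mem_map.2 ⟨j, hj, rfl⟩))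
            (by simpa using hij)
          simpa [List.get_cons_succ'] using this
        · intro i hi
          have := hinc 0 (Finset.mem_insert_self _ _)
            i.succ (Finset.mem_insert_of_mem (Finset.mem_map.2 ⟨i, hi, rfl⟩))
            (Fin.succ_pos i)
          simpa [List.get_cons_succ'] using this
      · rintro ⟨hlx, hc, hinc, hbd⟩
        refine ⟨by omega, ?_, ?_⟩
        · intro i hi j hj hij
          rcases Finset.mem_insert.1 hi with rfl | hi'
          · rcases Finset.mem_insert.1 hj with rfl | hj'
            · exact absurd hij (lt_irrefl _)
            · simp only [Finset.mem_map, Fin.coe_succEmb] at hj'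
              obtain ⟨j', hj', rfl⟩ := hj'
              have := hbd j' hj'
              simpa [List.get_cons_succ'] using this
          · rcases Finset.mem_insert.1 hj with rfl | hj'
            · exact absurd hij (Fin.not_lt_zero _)
            · simp only [Finset.mem_map, Fin.coe_succEmb] at hi' hj'
              obtain ⟨i', hi', rfl⟩ := hi'
              obtain ⟨j', hj', rfl⟩ := hj'
              have hlt : i' < j' := Fin.succ_lt_succ_iff.mp hij
              have := hinc i' hi' j' hj' hlt
              simpa [List.get_cons_succ'] using this
        · intro i hi
          rcases Finset.mem_insert.1 hi with rfl | hi'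
          · simpa using hlx
          · simp only [Finset.mem_map, Fin.coe_succEmb] at hi'
            obtain ⟨i', hi', rfl⟩ := hi'
            have h1 := hbd i' hi'
            have : lo < w.get i' := by omega
            simpa [List.get_cons_succ'] using this
    by_cases hlx : lo < x
    · rw [if_pos hlx]
      congr 1
      apply Finset.filter_congr
      intro T _
      rw [key T]
      simp [hlx]
    · rw [if_neg hlx, Finset.card_eq_zero]
      apply Finset.filter_false_of_mem
      intro T _
      rw [key T]
      rintro ⟨h1, -⟩
      exact hlx h1

lemma cntQ_eq_cntG (w : List ℕ) : ∀ (lo k : ℕ), cntQ lo w k = cntG lo w k := by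
  induction w with
  | nil =>
      intro lo k
      cases k with
      | zero => rw [cntQ_zero, cntG_zero]
      | succ k => rw [cntQ_nil, cntG_nil]
  | cons x w ih =>
      intro lo k
      cases k with
      | zero => rw [cntQ_zero, cntG_zero]
      | succ k =>
          rw [cntQ_succ, cntG_cons, ih lo (k+1), ih x k]


namespace Stmt11Aux

open OTree

lemma levels_one_le : ∀ (t : OTree), ∀ l ∈ t.levels, 1 ≤ l
  | .node [] => by simp [OTree.levels]
  | .node (t :: ts) => by
      intro l hl
      simp only [OTree.levels, Multiset.mem_add, Multiset.mem_cons, Multiset.mem_map] at hl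
      rcases hl with (rfl | ⟨a, ha, rfl⟩) | h
      · exact le_refl 1
      · omega
      · exact levels_one_le (.node ts) l h

lemma wordFrom_mem_bounds : ∀ (t : OTree) (s : ℕ), ∀ y ∈ t.wordFrom s,
    s < y ∧ y ≤ s + t.edges
  | .node [], s => by simp [OTree.wordFrom]
  | .node (t :: ts), s => by
      intro y hy
      simp only [OTree.wordFrom, List.mem_append, List.mem_cons] at hy
      have hE : (OTree.node (t :: ts)).edges = t.edges + 1 + (OTree.node ts).edges := by simp [OTree.edges]
      rcases hy with h | rfl | h
      · have := wordFrom_mem_bounds t (s + (OTree.node ts).edges) y h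
        omega
      · omega
      · have := wordFrom_mem_bounds (.node ts) s y h
        omega

lemma cntG_wordFrom : ∀ (t : OTree) (s lo k : ℕ), lo ≤ s →
    cntG lo (t.wordFrom s) (k+1) = (t.levels.map fun l => (l-1).choose k).sum
  | .node [], s, lo, k, _ => by simp [OTree.wordFrom, OTree.levels]
  | .node (x :: ts), s, lo, k, hlo => by
      have hE : (OTree.node (x :: ts)).edges = x.edges + 1 + (OTree.node ts).edges := by simp [OTree.edges]
      set A := x.wordFrom (s + (OTree.node ts).edges) with hAdef
      set B := (OTree.node ts).wordFrom s with hBdef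
      set m := s + (OTree.node (x :: ts)).edges with hmdef
      have hw : (OTree.node (x :: ts)).wordFrom s = A ++ m :: B := by rw [hAdef, hBdef, hmdef]; simp [OTree.wordFrom]
      have hA : ∀ a ∈ A, a < m := by
        intro a ha
        have := wordFrom_mem_bounds x (s + (OTree.node ts).edges) a ha
        omega
      have hB : ∀ b ∈ B, b < m := by
        intro b hb
        have := wordFrom_mem_bounds (.node ts) s b hb
        omega
      have hAB : ∀ a ∈ A, ∀ b ∈ B, b < a := by
        intro a ha b hb
        have h1 := wordFrom_mem_bounds x (s + (OTree.node ts).edges) a ha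
        have h2 := wordFrom_mem_bounds (.node ts) s b hb
        omega
      have hlm : lo < m := by omega
      have hL : (OTree.node (x :: ts)).levels =
          ((1 : ℕ) ::ₘ (x.levels).map (· + 1)) + (OTree.node ts).levels := by
        simp [OTree.levels]
      rw [hw, cntG_append A B m lo k hA hB hAB, if_pos hlm, hL]
      rw [Multiset.map_add, Multiset.sum_add, Multiset.map_cons, Multiset.sum_cons,
        Multiset.map_map]
      have hBc : cntG lo B (k+1) = ((OTree.node ts).levels.map fun l => (l-1).choose k).sum :=
        cntG_wordFrom (.node ts) s lo k hlo
      have hAc : cntG lo A (k+1) = (x.levels.map fun l => (l-1).choose k).sum :=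
        cntG_wordFrom x (s + (OTree.node ts).edges) lo k (by omega)
      rw [hBc, hAc]
      cases k with
      | zero =>
          have h1 : (Multiset.map ((fun l => (l - 1).choose 0) ∘ (· + 1)) x.levels).sum
              = (Multiset.map (fun l => (l - 1).choose 0) x.levels).sum := by
            simp [Function.comp]
          rw [cntG_zero, h1]
          simp
          omega
      | succ k' =>
          have hAc' : cntG lo A (k'+1) = (x.levels.map fun l => (l-1).choose k').sum :=
            cntG_wordFrom x (s + (OTree.node ts).edges) lo k' (by omega)
          rw [hAc']
          have h1 : (Multiset.map ((fun l => (l - 1).choose (k'+1)) ∘ (· + 1)) x.levels).sum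
              = (Multiset.map (fun l => (l-1).choose k' + (l-1).choose (k'+1)) x.levels).sum := by
            congr 1
            apply Multiset.map_congr rfl
            intro l hl
            have h2 : 1 ≤ l := levels_one_le x l hl
            have h3 : l - 1 + 1 = l := by omega
            simp only [Function.comp_apply, Nat.add_sub_cancel]
            rw [← h3, Nat.choose_succ_succ]
            simp [h3]
          rw [h1, Multiset.sum_map_add]
          have hz : (0 : ℕ) - 1 = 0 := rfl
          rw [hz, Nat.choose_eq_zero_of_lt (by omega : (0:ℕ) < k'+1)]
          ring

end Stmt11Aux


/-- For every ordered tree `T` and every `k ≥ 1`, the number of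
increasing patterns of length `k` in `π(T)` equals
`∑_{nonroot v} C(level(v) - 1, k - 1)`. -/
theorem stmt11 (T : OTree) (k : ℕ) (hk : 1 ≤ k) :
    incCountW T.word k = (T.levels.map fun l => (l - 1).choose (k - 1)).sum := by
  classical
  obtain ⟨k', rfl⟩ : ∃ k', k = k' + 1 := ⟨k - 1, by omega⟩
  have hpos : ∀ y ∈ T.word, 0 < y := by
    intro y hy
    have := Stmt11Aux.wordFrom_mem_bounds T 0 y hy
    omega
  have h1 : incCountW T.word (k'+1) = cntQ 0 T.word (k'+1) := by
    unfold incCountW cntQ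
    congr 1
    apply Finset.filter_congr
    intro S _
    constructor
    · rintro ⟨hc, hinc⟩
      exact ⟨hc, hinc, fun i _ => hpos _ (by rw [List.get_eq_getElem]; exact T.word.getElem_mem i.2)⟩
    · rintro ⟨hc, hinc, -⟩
      exact ⟨hc, hinc⟩
  rw [h1, cntQ_eq_cntG, OTree.word, Stmt11Aux.cntG_wordFrom T 0 0 k' (le_refl 0)]
  simp
end

section
/- For every ordered tree T, the number of 123 patterns (increasing patterns of length 3) in π(T) equals sum over nonroot vertices v of binomial(level(v) - 1, 2). -/
namespace Stmt12
open Finset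

def Frec : WithBot ℕ → ℕ → List ℕ → ℕ
  | _, 0, _ => 1
  | _, _+1, [] => 0
  | r, k+1, x :: w =>
      Frec r (k+1) w + if r < (x : WithBot ℕ) then Frec (x : WithBot ℕ) k w else 0

@[simp] lemma Frec_zero (r : WithBot ℕ) (w : List ℕ) : Frec r 0 w = 1 := by
  cases w <;> rfl

@[simp] lemma Frec_nil (r : WithBot ℕ) (k : ℕ) : Frec r (k+1) [] = 0 := rfl

lemma Frec_cons (r : WithBot ℕ) (k x : ℕ) (w : List ℕ) :
    Frec r (k+1) (x :: w)
      = Frec r (k+1) w + if r < (x : WithBot ℕ) then Frec (x : WithBot ℕ) k w else 0 := rfl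

lemma Frec_vanish (r : WithBot ℕ) (k : ℕ) (w : List ℕ)
    (h : ∀ y ∈ w, ¬ r < (y : WithBot ℕ)) : Frec r (k+1) w = 0 := by
  induction w with
  | nil => rfl
  | cons x w ih =>
      rw [Frec_cons, if_neg (h x (List.mem_cons_self)),
        ih (fun y hy => h y (List.mem_cons_of_mem _ hy))]

lemma Frec_one (w : List ℕ) : Frec ⊥ 1 w = w.length := by
  induction w with
  | nil => rfl
  | cons x w ih =>
      rw [Frec_cons]
      simp [ih, WithBot.bot_lt_coe]

lemma Frec_append (m : ℕ) (B : List ℕ) (hBm : ∀ b ∈ B, b < m) :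
    ∀ (A : List ℕ), (∀ a ∈ A, a < m) → (∀ b ∈ B, ∀ a ∈ A, b < a) →
    ∀ (r : WithBot ℕ), r < (m : WithBot ℕ) → ∀ k : ℕ,
    Frec r (k+1) (A ++ m :: B)
      = Frec r (k+1) A + Frec r k A + Frec r (k+1) B := by
  intro A
  induction A with
  | nil =>
      intro _ _ r hr k
      simp only [List.nil_append, Frec_cons, Frec_nil, if_pos hr]
      cases k with
      | zero => simp [Nat.add_comm]
      | succ k' =>
          rw [Frec_vanish (m : WithBot ℕ) k' B
            (fun y hy => by simpa using not_lt.2 (le_of_lt (hBm y hy)))]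
          simp
  | cons a A' ih =>
      intro hAm hBA r hr k
      have ham : a < m := hAm a List.mem_cons_self
      have hAm' : ∀ x ∈ A', x < m := fun x hx => hAm x (List.mem_cons_of_mem _ hx)
      have hBA' : ∀ b ∈ B, ∀ x ∈ A', b < x := fun b hb x hx => hBA b hb x (List.mem_cons_of_mem _ hx)
      have key := ih hAm' hBA'
      rw [List.cons_append, Frec_cons, key r hr k]
      cases k with
      | zero =>
          rw [Frec_cons, Frec_zero, Frec_zero]
          split_ifs with h <;> simp [Frec_zero] <;> omega
      | succ k' =>
          have hamb : (a : WithBot ℕ) < (m : WithBot ℕ) := by exact_mod_cast ham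
          rw [Frec_cons, Frec_cons]
          split_ifs with h
          · rw [key (a : WithBot ℕ) hamb k',
              Frec_vanish (a : WithBot ℕ) k' B
                (fun y hy => by
                  simpa using not_lt.2 (le_of_lt (hBA y hy a List.mem_cons_self)))]
            omega
          · omega

def fup {n : ℕ} (T : Finset (Fin n)) : Finset (Fin (n+1)) :=
  T.map ⟨Fin.succ, Fin.succ_injective n⟩

def fdown {n : ℕ} (S : Finset (Fin (n+1))) : Finset (Fin n) :=
  univ.filter fun i => i.succ ∈ S

@[simp] lemma succ_mem_fup {n : ℕ} {T : Finset (Fin n)} {i : Fin n} :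
    i.succ ∈ fup T ↔ i ∈ T := by
  simp [fup, (Fin.succ_injective n).eq_iff]

@[simp] lemma zero_not_mem_fup {n : ℕ} (T : Finset (Fin n)) :
    (0 : Fin (n+1)) ∉ fup T := by
  simp only [fup, mem_map, Function.Embedding.coeFn_mk, not_exists, not_and]
  exact fun x _ => Fin.succ_ne_zero x

lemma mem_fup_iff {n : ℕ} {T : Finset (Fin n)} {j : Fin (n+1)} :
    j ∈ fup T ↔ ∃ i ∈ T, i.succ = j := by simp [fup]

@[simp] lemma card_fup {n : ℕ} (T : Finset (Fin n)) : (fup T).card = T.card :=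
  card_map _

@[simp] lemma mem_fdown {n : ℕ} {S : Finset (Fin (n+1))} {i : Fin n} :
    i ∈ fdown S ↔ i.succ ∈ S := by simp [fdown]

lemma fdown_fup {n : ℕ} (T : Finset (Fin n)) : fdown (fup T) = T := by
  ext i; simp

lemma fup_fdown {n : ℕ} {S : Finset (Fin (n+1))} (h : (0 : Fin (n+1)) ∉ S) :
    fup (fdown S) = S := by
  ext j
  induction j using Fin.cases with
  | zero => simp [h]
  | succ i => simp

lemma fdown_insert {n : ℕ} (T : Finset (Fin n)) :
    fdown (insert (0 : Fin (n+1)) (fup T)) = T := by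
  ext i; simp [Fin.succ_ne_zero]

lemma insert_fup_fdown {n : ℕ} {S : Finset (Fin (n+1))} (h : (0 : Fin (n+1)) ∈ S) :
    insert 0 (fup (fdown S)) = S := by
  ext j
  induction j using Fin.cases with
  | zero => simp [h]
  | succ i => simp [Fin.succ_ne_zero]

lemma card_split (n : ℕ) (v : Fin (n+1) → ℕ) (r : WithBot ℕ) (k : ℕ) :
    ((univ : Finset (Finset (Fin (n+1)))).filter
      (fun S => S.card = k+1 ∧ (∀ i ∈ S, ∀ j ∈ S, i < j → v i < v j) ∧
        ∀ i ∈ S, r < (v i : WithBot ℕ))).card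
    = ((univ : Finset (Finset (Fin n))).filter
        (fun S => S.card = k+1 ∧ (∀ i ∈ S, ∀ j ∈ S, i < j → v i.succ < v j.succ) ∧
          ∀ i ∈ S, r < (v i.succ : WithBot ℕ))).card
      + (if r < (v 0 : WithBot ℕ) then
          ((univ : Finset (Finset (Fin n))).filter
            (fun S => S.card = k ∧ (∀ i ∈ S, ∀ j ∈ S, i < j → v i.succ < v j.succ) ∧
              ∀ i ∈ S, (v 0 : WithBot ℕ) < (v i.succ : WithBot ℕ))).card
        else 0) := by
  classical
  set A : Finset (Finset (Fin (n+1))) :=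
    (univ : Finset (Finset (Fin (n+1)))).filter
      (fun S => S.card = k+1 ∧ (∀ i ∈ S, ∀ j ∈ S, i < j → v i < v j) ∧
        ∀ i ∈ S, r < (v i : WithBot ℕ)) with hA
  have hsplit := card_filter_add_card_filter_not
    (s := A) (p := fun S => (0 : Fin (n+1)) ∈ S)
  have h1 : (A.filter fun S => ¬ (0 : Fin (n+1)) ∈ S).card
      = ((univ : Finset (Finset (Fin n))).filter
        (fun S => S.card = k+1 ∧ (∀ i ∈ S, ∀ j ∈ S, i < j → v i.succ < v j.succ) ∧
          ∀ i ∈ S, r < (v i.succ : WithBot ℕ))).card := by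
    apply card_nbij' (i := fdown) (j := fup)
    · intro S hS
      simp only [hA, mem_coe, mem_filter, mem_univ, true_and] at hS ⊢
      obtain ⟨⟨hcard, hchain, hbound⟩, h0⟩ := hS
      have hS' : fup (fdown S) = S := fup_fdown h0
      refine ⟨?_, ?_, ?_⟩
      · rw [← card_fup (fdown S), hS', hcard]
      · intro i hi j hj hij
        exact hchain _ (mem_fdown.1 hi) _ (mem_fdown.1 hj) (Fin.succ_lt_succ_iff.mpr hij)
      · intro i hi
        exact hbound _ (mem_fdown.1 hi)
    · intro T hT
      simp only [hA, mem_coe, mem_filter, mem_univ, true_and] at hT ⊢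
      obtain ⟨hcard, hchain, hbound⟩ := hT
      refine ⟨⟨?_, ?_, ?_⟩, ?_⟩
      · rw [card_fup, hcard]
      · intro i hi j hj hij
        obtain ⟨a, ha, rfl⟩ := mem_fup_iff.1 hi
        obtain ⟨b, hb, rfl⟩ := mem_fup_iff.1 hj
        exact hchain a ha b hb (Fin.succ_lt_succ_iff.mp hij)
      · intro i hi
        obtain ⟨a, ha, rfl⟩ := mem_fup_iff.1 hi
        exact hbound a ha
      · exact zero_not_mem_fup T
    · intro S hS
      simp only [hA, mem_coe, mem_filter] at hS
      exact fup_fdown hS.2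
    · intro T _
      exact fdown_fup T
  have h2 : (A.filter fun S => (0 : Fin (n+1)) ∈ S).card
      = (if r < (v 0 : WithBot ℕ) then
          ((univ : Finset (Finset (Fin n))).filter
            (fun S => S.card = k ∧ (∀ i ∈ S, ∀ j ∈ S, i < j → v i.succ < v j.succ) ∧
              ∀ i ∈ S, (v 0 : WithBot ℕ) < (v i.succ : WithBot ℕ))).card
        else 0) := by
    by_cases hr : r < (v 0 : WithBot ℕ)
    · rw [if_pos hr]
      apply card_nbij' (i := fdown) (j := fun T => insert 0 (fup T))
      · intro S hS
        simp only [hA, mem_coe, mem_filter, mem_univ, true_and] at hS ⊢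
        obtain ⟨⟨hcard, hchain, hbound⟩, h0⟩ := hS
        have hS' : insert (0 : Fin (n+1)) (fup (fdown S)) = S := insert_fup_fdown h0
        refine ⟨?_, ?_, ?_⟩
        · have := card_insert_of_notMem (zero_not_mem_fup (fdown S))
          rw [hS', hcard, card_fup] at this
          omega
        · intro i hi j hj hij
          exact hchain _ (mem_fdown.1 hi) _ (mem_fdown.1 hj) (Fin.succ_lt_succ_iff.mpr hij)
        · intro i hi
          exact_mod_cast WithBot.coe_lt_coe.mpr
            (hchain 0 h0 _ (mem_fdown.1 hi) (Fin.succ_pos i))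
      · intro T hT
        simp only [hA, mem_coe, mem_filter, mem_univ, true_and] at hT ⊢
        obtain ⟨hcard, hchain, hbound⟩ := hT
        refine ⟨⟨?_, ?_, ?_⟩, ?_⟩
        · rw [card_insert_of_notMem (zero_not_mem_fup T), card_fup, hcard]
        · intro i hi j hj hij
          rcases mem_insert.1 hi with rfl | hi'
          · rcases mem_insert.1 hj with rfl | hj'
            · exact absurd hij (lt_irrefl _)
            · obtain ⟨b, hb, rfl⟩ := mem_fup_iff.1 hj'
              exact_mod_cast hbound b hb
          · rcases mem_insert.1 hj with rfl | hj'
            · obtain ⟨a, ha, rfl⟩ := mem_fup_iff.1 hi'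
              exact absurd hij (by simp [Fin.lt_iff_val_lt_val])
            · obtain ⟨a, ha, rfl⟩ := mem_fup_iff.1 hi'
              obtain ⟨b, hb, rfl⟩ := mem_fup_iff.1 hj'
              exact hchain a ha b hb (Fin.succ_lt_succ_iff.mp hij)
        · intro i hi
          rcases mem_insert.1 hi with rfl | hi'
          · exact hr
          · obtain ⟨a, ha, rfl⟩ := mem_fup_iff.1 hi'
            exact lt_trans hr (hbound a ha)
        · exact mem_insert_self _ _
      · intro S hS
        simp only [hA, mem_coe, mem_filter] at hS
        exact insert_fup_fdown hS.2
      · intro T _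
        exact fdown_insert T
    · rw [if_neg hr]
      rw [Finset.card_eq_zero, Finset.filter_eq_empty_iff]
      intro S hS
      simp only [hA, mem_filter, mem_univ, true_and] at hS
      intro h0
      exact hr (hS.2.2 0 h0)
  omega

def Fset (r : WithBot ℕ) (k : ℕ) (w : List ℕ) : ℕ :=
  ((univ : Finset (Finset (Fin w.length))).filter
    (fun S => S.card = k ∧ (∀ i ∈ S, ∀ j ∈ S, i < j → w.get i < w.get j) ∧
      ∀ i ∈ S, r < (w.get i : WithBot ℕ))).card

lemma Fset_zero (r : WithBot ℕ) (w : List ℕ) : Fset r 0 w = 1 := by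
  unfold Fset
  have h : ((univ : Finset (Finset (Fin w.length))).filter
      (fun S => S.card = 0 ∧ (∀ i ∈ S, ∀ j ∈ S, i < j → w.get i < w.get j) ∧
        ∀ i ∈ S, r < (w.get i : WithBot ℕ))) = {∅} := by
    ext S
    simp only [mem_filter, mem_univ, true_and, mem_singleton, card_eq_zero]
    constructor
    · rintro ⟨h, -⟩; exact h
    · rintro rfl; simp
  rw [h, card_singleton]

lemma Fset_nil (r : WithBot ℕ) (k : ℕ) : Fset r (k+1) [] = 0 := by
  unfold Fset
  rw [Finset.card_eq_zero, Finset.filter_eq_empty_iff]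
  intro S _
  have h0 : S.card ≤ 0 := by simpa using card_le_univ S
  rintro ⟨hc, -⟩
  omega

lemma Fset_cons (r : WithBot ℕ) (k x : ℕ) (w : List ℕ) :
    Fset r (k+1) (x :: w)
      = Fset r (k+1) w + if r < (x : WithBot ℕ) then Fset (x : WithBot ℕ) k w else 0 := by
  have hget : ∀ i : Fin w.length, (x :: w).get i.succ = w.get i := fun i => rfl
  have hget0 : (x :: w).get (0 : Fin (w.length + 1)) = x := rfl
  have h := card_split w.length (fun i => (x :: w).get i) r k
  simp only [hget, hget0] at h
  exact h

lemma Fset_eq_Frec : ∀ (w : List ℕ) (r : WithBot ℕ) (k : ℕ), Fset r k w = Frec r k w := by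
  intro w
  induction w with
  | nil =>
      intro r k
      cases k with
      | zero => rw [Fset_zero, Frec_zero]
      | succ k => rw [Fset_nil, Frec_nil]
  | cons x w ih =>
      intro r k
      cases k with
      | zero => rw [Fset_zero, Frec_zero]
      | succ k => simp only [Fset_cons, Frec_cons, ih]

lemma incCountW_eq_Fset (w : List ℕ) (k : ℕ) : incCountW w k = Fset ⊥ k w := by
  unfold incCountW Fset
  congr 1
  apply filter_congr
  intro S _
  constructor
  · rintro ⟨h1, h2⟩
    exact ⟨h1, h2, fun i _ => WithBot.bot_lt_coe _⟩
  · rintro ⟨h1, h2, -⟩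
    exact ⟨h1, h2⟩

theorem treeRec {P : OTree → Prop} (h0 : P (OTree.node []))
    (h1 : ∀ t ts, P t → P (OTree.node ts) → P (OTree.node (t :: ts))) : ∀ t, P t
  | .node [] => h0
  | .node (t :: ts) => h1 t ts (treeRec h0 h1 t) (treeRec h0 h1 (.node ts))

lemma length_wordFrom : ∀ (t : OTree) (k : ℕ), (OTree.wordFrom t k).length = t.edges := by
  intro t
  induction t using treeRec with
  | h0 => intro k; simp [OTree.wordFrom, OTree.edges]
  | h1 t ts iht ihts =>
      intro k
      simp only [OTree.wordFrom, OTree.edges, List.length_append, List.length_cons,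
        iht, ihts]
      omega

lemma mem_wordFrom : ∀ (t : OTree) (k : ℕ), ∀ y ∈ OTree.wordFrom t k,
    k < y ∧ y ≤ k + t.edges := by
  intro t
  induction t using treeRec with
  | h0 => intro k y hy; simp [OTree.wordFrom] at hy
  | h1 t ts iht ihts =>
      intro k y hy
      rw [OTree.wordFrom] at hy
      rcases List.mem_append.1 hy with hy | hy
      · have := iht _ y hy
        simp only [OTree.edges] at *
        omega
      · rcases List.mem_cons.1 hy with rfl | hy
        · simp only [OTree.edges] at *
          omega
        · have := ihts k y hy
          simp only [OTree.edges] at *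
          omega

lemma one_le_levels : ∀ (t : OTree), ∀ l ∈ t.levels, 1 ≤ l := by
  intro t
  induction t using treeRec with
  | h0 => intro l hl; simp [OTree.levels] at hl
  | h1 t ts iht ihts =>
      intro l hl
      rw [OTree.levels] at hl
      rcases Multiset.mem_add.1 hl with hl | hl
      · rcases Multiset.mem_cons.1 hl with rfl | hl
        · exact le_refl 1
        · obtain ⟨a, _, rfl⟩ := Multiset.mem_map.1 hl
          omega
      · exact ihts l hl

lemma card_levels : ∀ t : OTree, Multiset.card t.levels = t.edges := by
  intro t
  induction t using treeRec with
  | h0 => simp [OTree.levels, OTree.edges]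
  | h1 t ts iht ihts =>
      rw [OTree.levels, OTree.edges]
      simp [iht, ihts]
      omega

lemma sum_map_sub_one (L : Multiset ℕ) (h : ∀ l ∈ L, 1 ≤ l) :
    (L.map (fun l => l - 1)).sum + Multiset.card L = L.sum := by
  induction L using Multiset.induction_on with
  | empty => simp
  | cons a s ih =>
      have h1 := h a (Multiset.mem_cons_self a s)
      have h2 := ih (fun l hl => h l (Multiset.mem_cons_of_mem hl))
      simp only [Multiset.map_cons, Multiset.sum_cons, Multiset.card_cons]
      omega

lemma choose_step (l : ℕ) : l.choose 2 = (l - 1).choose 2 + (l - 1) := by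
  cases l with
  | zero => rfl
  | succ n =>
      rw [Nat.succ_sub_one]
      have h := Nat.choose_succ_succ n 1
      norm_num at h
      omega

lemma main : ∀ t : OTree, ∀ k : ℕ,
    Frec ⊥ 2 (OTree.wordFrom t k) = ((t.levels).map (fun l => l - 1)).sum ∧
    Frec ⊥ 3 (OTree.wordFrom t k) = ((t.levels).map (fun l => (l - 1).choose 2)).sum := by
  intro t
  induction t using treeRec with
  | h0 =>
      intro k
      rw [show OTree.wordFrom (OTree.node []) k = [] from by rw [OTree.wordFrom],
        show OTree.levels (OTree.node []) = 0 from by rw [OTree.levels]]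
      constructor
      · simpa using Frec_nil ⊥ 1
      · simpa using Frec_nil ⊥ 2
  | h1 t ts iht ihts =>
      intro k
      have hEt : OTree.edges (OTree.node (t :: ts)) = t.edges + 1 + OTree.edges (OTree.node ts) := by
        rw [OTree.edges]
      set Ets := OTree.edges (OTree.node ts) with hEts
      set A := OTree.wordFrom t (k + Ets) with hA
      set m := k + OTree.edges (OTree.node (t :: ts)) with hm
      set B := OTree.wordFrom (OTree.node ts) k with hB
      have hword : OTree.wordFrom (OTree.node (t :: ts)) k = A ++ m :: B := by
        rw [hA, hm, hB, hEts]
        rw [OTree.wordFrom]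
      have hAmem : ∀ a ∈ A, k + Ets < a ∧ a ≤ (k + Ets) + t.edges :=
        fun a ha => mem_wordFrom t _ a ha
      have hBmem : ∀ b ∈ B, k < b ∧ b ≤ k + Ets := fun b hb => mem_wordFrom _ _ b hb
      have hAm : ∀ a ∈ A, a < m := by
        intro a ha; have := hAmem a ha; rw [hm, hEt]; omega
      have hBm : ∀ b ∈ B, b < m := by
        intro b hb; have := hBmem b hb; rw [hm, hEt]; omega
      have hBA : ∀ b ∈ B, ∀ a ∈ A, b < a := by
        intro b hb a ha; have := hBmem b hb; have := hAmem a ha; omega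
      have happ2 := Frec_append m B hBm A hAm hBA ⊥ (WithBot.bot_lt_coe m) 1
      have happ3 := Frec_append m B hBm A hAm hBA ⊥ (WithBot.bot_lt_coe m) 2
      norm_num at happ2 happ3
      have hlenA : Frec ⊥ 1 A = t.edges := by
        rw [Frec_one, hA, length_wordFrom]
      have hlev : OTree.levels (OTree.node (t :: ts))
          = ((1 : ℕ) ::ₘ (t.levels).map (· + 1)) + OTree.levels (OTree.node ts) := by
        rw [OTree.levels]
      have hsum : (t.levels).sum = ((t.levels).map (fun l => l - 1)).sum + t.edges := by
        rw [← sum_map_sub_one t.levels (one_le_levels t), card_levels]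
      constructor
      · rw [hword, happ2, hlenA, (iht (k + Ets)).1, (ihts k).1, hlev]
        simp only [Multiset.map_add, Multiset.sum_add, Multiset.map_cons, Multiset.sum_cons,
          Multiset.map_map, Function.comp]
        simp only [Nat.add_sub_cancel]
        rw [show ((t.levels).map (fun l => l)).sum = (t.levels).sum by simp, hsum]
        omega
      · rw [hword, happ3, (iht (k + Ets)).1, (iht (k + Ets)).2, (ihts k).2, hlev]
        simp only [Multiset.map_add, Multiset.sum_add, Multiset.map_cons, Multiset.sum_cons,
          Multiset.map_map, Function.comp]
        simp only [Nat.add_sub_cancel]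
        have hch : ((t.levels).map (fun l => l.choose 2)).sum
            = ((t.levels).map (fun l => (l - 1).choose 2)).sum
              + ((t.levels).map (fun l => l - 1)).sum := by
          rw [← Multiset.sum_map_add]
          congr 1
          apply Multiset.map_congr rfl
          intro l _
          exact choose_step l
        rw [hch]
        norm_num

end Stmt12

/-- For every ordered tree `T`, the number of 123 patterns in
`π(T)` equals `∑_{nonroot v} C(level(v) - 1, 2)`. -/
theorem stmt12 (T : OTree) :
    incCountW T.word 3 = (T.levels.map fun l => (l - 1).choose 2).sum := by
  rw [Stmt12.incCountW_eq_Fset, Stmt12.Fset_eq_Frec]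
  exact (Stmt12.main T 0).2
end

section
/- For all n and r, the number of 132-avoiding permutations of length n with exactly r increasing patterns of length k equals the number of ordered trees with n edges such that sum over nonroot vertices v of binomial(level(v) - 1, k - 1) equals r. -/
namespace S13

open List

/-- count of `k`-element increasing sublists (by position) all of whose values satisfy `R`. -/
def cntL (R : ℕ → Prop) [DecidablePred R] (w : List ℕ) (k : ℕ) : ℕ :=
  (w.sublistsLen k).countP (fun s => decide (s.IsChain (· < ·) ∧ ∀ v ∈ s, R v))

theorem cntL_zero (R : ℕ → Prop) [DecidablePred R] (w : List ℕ) : cntL R w 0 = 1 := by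
  simp [cntL]

theorem cntL_nil (R : ℕ → Prop) [DecidablePred R] (k : ℕ) : cntL R [] (k + 1) = 0 := by
  simp [cntL]

theorem chain'_cons_iff (y : ℕ) (s : List ℕ) :
    (IsChain (· < ·) (y :: s)) ↔ IsChain (· < ·) s ∧ ∀ v ∈ s, y < v := by
  rw [List.isChain_cons, List.isChain_iff_pairwise]
  constructor
  · rintro ⟨h1, h2⟩
    refine ⟨h2, fun v hv => ?_⟩
    rcases s with _ | ⟨a, s⟩
    · simp at hv
    · have ha : y < a := h1 a rfl
      rcases List.mem_cons.1 hv with rfl | hv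
      · exact ha
      · exact ha.trans (List.rel_of_pairwise_cons h2 hv)
  · rintro ⟨h1, h2⟩
    exact ⟨fun a ha => h2 a (by cases s <;> simp_all), h1⟩

theorem cntL_cons (R : ℕ → Prop) [DecidablePred R] (y : ℕ) (w : List ℕ) (k : ℕ) :
    cntL R (y :: w) (k + 1) =
      cntL R w (k + 1) + if R y then cntL (fun v => R v ∧ y < v) w k else 0 := by
  rw [cntL, sublistsLen_succ_cons, List.countP_append, List.countP_map]
  congr 1
  rcases Classical.em (R y) with hy | hy
  · rw [if_pos hy, cntL]
    apply List.countP_congr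
    intro s _
    simp only [Function.comp_apply, decide_eq_true_eq, chain'_cons_iff]
    constructor
    · rintro ⟨⟨h1, h2⟩, h3⟩
      exact ⟨h1, fun v hv => ⟨h3 v (by simp [hv]), h2 v hv⟩⟩
    · rintro ⟨h1, h2⟩
      exact ⟨⟨h1, fun v hv => (h2 v hv).2⟩, by
        intro v hv
        rcases List.mem_cons.1 hv with rfl | hv
        · exact hy
        · exact (h2 v hv).1⟩
  · rw [if_neg hy]
    rw [List.countP_eq_zero]
    intro s _
    simp only [Function.comp_apply, decide_eq_true_eq, not_and]
    intro _ h
    exact absurd (h y (by simp)) hy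


def cntF (R : ℕ → Prop) [DecidablePred R] (w : List ℕ) (k : ℕ) : ℕ :=
  ((Finset.univ : Finset (Finset (Fin w.length))).filter
    (fun S => S.card = k ∧ (∀ i ∈ S, ∀ j ∈ S, i < j → w.get i < w.get j)
      ∧ ∀ i ∈ S, R (w.get i))).card

theorem cntF_zero (R : ℕ → Prop) [DecidablePred R] (w : List ℕ) : cntF R w 0 = 1 := by
  rw [cntF]
  have : ((Finset.univ : Finset (Finset (Fin w.length))).filter
      (fun S => S.card = 0 ∧ (∀ i ∈ S, ∀ j ∈ S, i < j → w.get i < w.get j)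
        ∧ ∀ i ∈ S, R (w.get i))) = {∅} := by
    ext S
    simp only [Finset.mem_filter, Finset.mem_univ, true_and, Finset.mem_singleton,
      Finset.card_eq_zero]
    constructor
    · rintro ⟨rfl, -, -⟩; rfl
    · rintro rfl; simp
  rw [this, Finset.card_singleton]

theorem cntF_nil (R : ℕ → Prop) [DecidablePred R] (k : ℕ) : cntF R [] (k + 1) = 0 := by
  rw [cntF, Finset.card_eq_zero]
  ext S
  simp only [Finset.mem_filter, Finset.mem_univ, true_and, Finset.notMem_empty, iff_false,
    not_and]
  intro hc
  exfalso
  have : S = (∅ : Finset (Fin (List.length ([] : List ℕ)))) := by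
    ext i; exact absurd i.2 (by simp)
  rw [this] at hc; simp at hc

/-- map down: keep the successors -/
def dn {n : ℕ} (S : Finset (Fin (n + 1))) : Finset (Fin n) :=
  (Finset.univ : Finset (Fin n)).filter (fun i => i.succ ∈ S)

/-- map up -/
def up {n : ℕ} (T : Finset (Fin n)) : Finset (Fin (n + 1)) :=
  T.map ⟨Fin.succ, Fin.succ_injective n⟩

@[simp] theorem mem_dn {n : ℕ} {S : Finset (Fin (n + 1))} {i : Fin n} :
    i ∈ dn S ↔ i.succ ∈ S := by simp [dn]

@[simp] theorem mem_up {n : ℕ} {T : Finset (Fin n)} {j : Fin (n + 1)} :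
    j ∈ up T ↔ ∃ i ∈ T, i.succ = j := by simp [up]

theorem up_dn {n : ℕ} (S : Finset (Fin (n + 1))) (h0 : (0 : Fin (n+1)) ∉ S) : up (dn S) = S := by
  ext j
  induction j using Fin.cases with
  | zero => simp only [mem_up]; constructor
            · rintro ⟨i, -, hi⟩; exact absurd hi (Fin.succ_ne_zero i)
            · intro h; exact absurd h h0
  | succ i => simp
theorem dn_up {n : ℕ} (T : Finset (Fin n)) : dn (up T) = T := by
  ext i
  simp [Fin.succ_inj]

theorem card_dn {n : ℕ} (S : Finset (Fin (n + 1))) (h0 : (0 : Fin (n+1)) ∉ S) :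
    (dn S).card = S.card := by
  conv_rhs => rw [← up_dn S h0]
  simp [up]

theorem dn_insert {n : ℕ} (S : Finset (Fin (n + 1))) : dn (insert 0 S) = dn S := by
  ext i
  simp [Fin.succ_ne_zero]

theorem card_up {n : ℕ} (T : Finset (Fin n)) : (up T).card = T.card := Finset.card_map _

theorem zero_not_mem_up {n : ℕ} (T : Finset (Fin n)) : (0 : Fin (n+1)) ∉ up T := by
  simp only [mem_up, not_exists]
  intro a
  simp [Fin.succ_ne_zero]

theorem insert_up_dn {n : ℕ} (S : Finset (Fin (n + 1))) (h0 : (0 : Fin (n+1)) ∈ S) :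
    insert 0 (up (dn S)) = S := by
  ext j
  induction j using Fin.cases with
  | zero => simp [h0]
  | succ i => simp [Fin.succ_ne_zero]

theorem cntF_cons (R : ℕ → Prop) [DecidablePred R] (y : ℕ) (w : List ℕ) (k : ℕ) :
    cntF R (y :: w) (k + 1) =
      cntF R w (k + 1) + if R y then cntF (fun v => R v ∧ y < v) w k else 0 := by
  classical
  set n := w.length with hn
  set P : Finset (Fin (n + 1)) → Prop := fun S =>
    S.card = k + 1 ∧ (∀ i ∈ S, ∀ j ∈ S, i < j → (y :: w).get i < (y :: w).get j)
      ∧ ∀ i ∈ S, R ((y :: w).get i) with hP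
  have key : cntF R (y :: w) (k + 1) =
      ((Finset.univ : Finset (Finset (Fin (n+1)))).filter (fun S => P S ∧ (0 : Fin (n+1)) ∉ S)).card
      + ((Finset.univ : Finset (Finset (Fin (n+1)))).filter (fun S => P S ∧ (0 : Fin (n+1)) ∈ S)).card := by
    have h1 : cntF R (y :: w) (k + 1) =
        ((Finset.univ : Finset (Finset (Fin (n+1)))).filter P).card := rfl
    rw [h1, ← Finset.card_filter_add_card_filter_not (s := Finset.univ.filter P)
      (p := fun S => (0 : Fin (n+1)) ∉ S), Finset.filter_filter, Finset.filter_filter]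
    congr 2
    ext S; simp
  rw [key]
  congr 1
  -- part A : sets not containing 0
  · apply Finset.card_nbij' (i := dn) (j := up)
    · intro S hS
      simp only [Finset.mem_coe, Finset.mem_filter, Finset.mem_univ, true_and, hP] at hS ⊢
      obtain ⟨⟨hc, hinc, hR⟩, h0⟩ := hS
      refine ⟨by rw [card_dn S h0]; exact hc, ?_, ?_⟩
      · intro i hi j hj hij
        have := hinc i.succ (by simpa using hi) j.succ (by simpa using hj)
          (by simpa [Fin.succ_lt_succ_iff] using hij)
        simpa using this
      · intro i hi
        have := hR i.succ (by simpa using hi)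
        simpa using this
    · intro T hT
      simp only [Finset.mem_coe, Finset.mem_filter, Finset.mem_univ, true_and, hP] at hT ⊢
      obtain ⟨hc, hinc, hR⟩ := hT
      refine ⟨⟨by rw [card_up]; exact hc, ?_, ?_⟩, zero_not_mem_up T⟩
      · intro i hi j hj hij
        rcases mem_up.1 hi with ⟨a, ha, rfl⟩
        rcases mem_up.1 hj with ⟨b, hb, rfl⟩
        have : a < b := by simpa [Fin.succ_lt_succ_iff] using hij
        simpa using hinc a ha b hb this
      · intro i hi
        rcases mem_up.1 hi with ⟨a, ha, rfl⟩
        simpa using hR a ha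
    · intro S hS
      simp only [Finset.mem_coe, Finset.mem_filter] at hS
      exact up_dn S hS.2.2
    · intro T hT
      exact dn_up T
  -- part B : sets containing 0
  · by_cases hy : R y
    · rw [if_pos hy]
      apply Finset.card_nbij' (i := dn) (j := fun T => insert 0 (up T))
      · intro S hS
        simp only [Finset.mem_coe, Finset.mem_filter, Finset.mem_univ, true_and, hP] at hS ⊢
        obtain ⟨⟨hc, hinc, hR⟩, h0⟩ := hS
        refine ⟨?_, ?_, ?_⟩
        · have h2 : S.card = (up (dn S)).card + 1 := by
            conv_lhs => rw [← insert_up_dn S h0]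
            rw [Finset.card_insert_of_notMem (zero_not_mem_up _)]
          rw [card_up] at h2
          omega
        · intro i hi j hj hij
          have := hinc i.succ (by simpa using hi) j.succ (by simpa using hj)
            (by simpa [Fin.succ_lt_succ_iff] using hij)
          simpa using this
        · intro i hi
          have h1 := hR i.succ (by simpa using hi)
          have h2 := hinc 0 h0 i.succ (by simpa using hi) (Fin.succ_pos i)
          exact ⟨by simpa using h1, by simpa using h2⟩
      · intro T hT
        simp only [Finset.mem_coe, Finset.mem_filter, Finset.mem_univ, true_and, hP] at hT ⊢
        obtain ⟨hc, hinc, hR⟩ := hT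
        refine ⟨⟨?_, ?_, ?_⟩, by simp⟩
        · rw [Finset.card_insert_of_notMem (zero_not_mem_up T), card_up, hc]
        · intro i hi j hj hij
          rcases Finset.mem_insert.1 hi with rfl | hi
          · rcases Finset.mem_insert.1 hj with rfl | hj
            · exact absurd hij (lt_irrefl _)
            · rcases mem_up.1 hj with ⟨b, hb, rfl⟩
              simpa using (hR b hb).2
          · rcases mem_up.1 hi with ⟨a, ha, rfl⟩
            rcases Finset.mem_insert.1 hj with rfl | hj
            · exact absurd hij (by simp [Fin.lt_def])
            · rcases mem_up.1 hj with ⟨b, hb, rfl⟩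
              have : a < b := by simpa [Fin.succ_lt_succ_iff] using hij
              simpa using hinc a ha b hb this
        · intro i hi
          rcases Finset.mem_insert.1 hi with rfl | hi
          · simpa using hy
          · rcases mem_up.1 hi with ⟨a, ha, rfl⟩
            simpa using (hR a ha).1
      · intro S hS
        simp only [Finset.mem_coe, Finset.mem_filter] at hS
        exact insert_up_dn S hS.2.2
      · intro T hT
        rw [dn_insert, dn_up]
    · rw [if_neg hy]
      rw [Finset.card_eq_zero, Finset.eq_empty_iff_forall_notMem]
      intro S hS
      simp only [Finset.mem_coe, Finset.mem_filter, Finset.mem_univ, true_and, hP] at hS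
      exact hy (by simpa using hS.1.2.2 0 hS.2)


theorem cntF_eq_cntL : ∀ (w : List ℕ) (R : ℕ → Prop) [DecidablePred R] (k : ℕ),
    cntF R w k = cntL R w k
  | _, R, _, 0 => by rw [cntF_zero, cntL_zero]
  | [], R, _, (k+1) => by rw [cntF_nil, cntL_nil]
  | (y::w), R, _, (k+1) => by
      rw [cntF_cons, cntL_cons, cntF_eq_cntL w R (k+1)]
      congr 1
      by_cases hy : R y
      · rw [if_pos hy, if_pos hy, cntF_eq_cntL w _ k]
      · rw [if_neg hy, if_neg hy]


theorem cntL_congr {R R' : ℕ → Prop} [DecidablePred R] [DecidablePred R']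
    (h : ∀ v, R v ↔ R' v) (w : List ℕ) (k : ℕ) : cntL R w k = cntL R' w k := by
  rw [cntL, cntL]
  apply List.countP_congr
  intro s _
  simp only [decide_eq_true_eq]
  constructor
  · rintro ⟨h1, h2⟩; exact ⟨h1, fun v hv => (h v).mp (h2 v hv)⟩
  · rintro ⟨h1, h2⟩; exact ⟨h1, fun v hv => (h v).mpr (h2 v hv)⟩

theorem cntL_true_and (a : ℕ) (w : List ℕ) (k : ℕ) :
    cntL (fun v => True ∧ a < v) w k = cntL (fun v => a < v) w k :=
  cntL_congr (fun v => by simp) w k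

theorem cntL_and_max (x a : ℕ) (w : List ℕ) (k : ℕ) :
    cntL (fun v => x < v ∧ a < v) w k = cntL (fun v => max x a < v) w k :=
  cntL_congr (fun v => (max_lt_iff).symm) w k

theorem cntL_of_none {R : ℕ → Prop} [DecidablePred R] {w : List ℕ}
    (h : ∀ v ∈ w, ¬ R v) (k : ℕ) : cntL R w (k + 1) = 0 := by
  rw [cntL, List.countP_eq_zero]
  intro s hs
  rcases List.mem_sublistsLen.1 hs with ⟨hsub, hlen⟩
  simp only [decide_eq_true_eq, not_and]
  intro _
  rcases s with _ | ⟨v, s⟩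
  · simp at hlen
  · intro hall
    exact h v (hsub.subset (by simp)) (hall v (by simp))

theorem sublistsLen_map' {α β : Type*} (f : α → β) :
    ∀ (n : ℕ) (l : List α), sublistsLen n (l.map f) = (sublistsLen n l).map (List.map f)
  | 0, l => by simp
  | (n+1), [] => by simp
  | (n+1), (a :: l) => by
      rw [List.map_cons, sublistsLen_succ_cons, sublistsLen_succ_cons,
        sublistsLen_map' f (n+1) l, sublistsLen_map' f n l, List.map_append, List.map_map,
        List.map_map]
      rfl

theorem cntL_map_add (c : ℕ) (w : List ℕ) (k : ℕ) :
    cntL (fun _ => True) (w.map (· + c)) k = cntL (fun _ => True) w k := by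
  rw [cntL, cntL, sublistsLen_map', List.countP_map]
  apply List.countP_congr
  intro s _
  simp only [Function.comp_apply, decide_eq_true_eq, and_true, List.isChain_map]
  constructor
  · rintro ⟨h, -⟩; exact ⟨List.IsChain.imp (fun a b hab => by simpa using hab) h, by simp⟩
  · rintro ⟨h, -⟩; exact ⟨List.IsChain.imp (fun a b hab => by simpa using hab) h, by simp⟩

/-- key decomposition, bounded version -/
theorem keyB : ∀ (A : List ℕ) (x m : ℕ) (B : List ℕ) (j : ℕ), x < m → (∀ a ∈ A, a < m) →
    (∀ b ∈ B, ¬ x < b) →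
    cntL (fun v => x < v) (A ++ m :: B) (j + 1) =
      cntL (fun v => x < v) A (j + 1) + cntL (fun v => x < v) A j
  | [], x, m, B, j, hxm, _, hB => by
      rw [List.nil_append, cntL_cons, if_pos hxm, cntL_of_none hB]
      rcases j with _ | j
      · rw [cntL_zero, cntL_zero, cntL_nil]
      · rw [cntL_of_none (R := fun v => x < v ∧ m < v)
          (fun b hb hh => hB b hb hh.1) j, cntL_nil, cntL_nil]
  | (a :: A'), x, m, B, j, hxm, hA, hB => by
      have ham : a < m := hA a (by simp)
      have hA' : ∀ a' ∈ A', a' < m := fun a' ha' => hA a' (by simp [ha'])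
      rw [List.cons_append, cntL_cons, keyB A' x m B j hxm hA' hB]
      by_cases hxa : x < a
      · rw [if_pos hxa]
        rcases j with _ | j
        · simp only [cntL_zero, cntL_cons, hxa, if_true]
        · rw [cntL_and_max, keyB A' (max x a) m B j (by omega) hA'
              (fun b hb => by have := hB b hb; omega),
            ← cntL_and_max x a A' (j+1), ← cntL_and_max x a A' j,
            cntL_cons, if_pos hxa, cntL_cons, if_pos hxa]
          omega
      · rw [if_neg hxa, cntL_cons, if_neg hxa]
        rcases j with _ | j
        · simp only [cntL_zero]
        · rw [cntL_cons, if_neg hxa]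
          omega

/-- key decomposition -/
theorem keyM : ∀ (A : List ℕ) (m : ℕ) (B : List ℕ) (k : ℕ), (∀ a ∈ A, a < m) →
    (∀ b ∈ B, b < m) → (∀ a ∈ A, ∀ b ∈ B, b < a) →
    cntL (fun _ => True) (A ++ m :: B) (k + 1) =
      cntL (fun _ => True) A (k + 1) + cntL (fun _ => True) B (k + 1)
        + cntL (fun _ => True) A k
  | [], m, B, k, _, hB, _ => by
      rw [List.nil_append, cntL_cons, if_pos trivial, cntL_true_and]
      rcases k with _ | k
      · simp only [cntL_zero, cntL_nil]
        omega
      · rw [cntL_of_none (R := fun v => m < v) (fun b hb => by have := hB b hb; omega) k]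
        simp only [cntL_nil]
        omega
  | (a :: A'), m, B, k, hA, hB, hAB => by
      have ham : a < m := hA a (by simp)
      have hA' : ∀ a' ∈ A', a' < m := fun a' ha' => hA a' (by simp [ha'])
      have hAB' : ∀ a' ∈ A', ∀ b ∈ B, b < a' := fun a' ha' => hAB a' (by simp [ha'])
      have haB : ∀ b ∈ B, ¬ a < b := fun b hb => by have := hAB a (by simp) b hb; omega
      rw [List.cons_append, cntL_cons, if_pos trivial, keyM A' m B k hA' hB hAB',
        cntL_true_and]
      rcases k with _ | k
      · simp only [cntL_zero, cntL_cons, if_pos trivial, cntL_true_and]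
        omega
      · rw [keyB A' a m B k ham hA' haB, cntL_cons, if_pos trivial, cntL_true_and,
          cntL_cons, if_pos trivial, cntL_true_and]
        omega


open OTree

theorem treeInd (P : OTree → Prop) (h0 : P (OTree.node []))
    (h1 : ∀ t ts, P t → P (OTree.node ts) → P (OTree.node (t :: ts))) : ∀ t, P t
  | OTree.node [] => h0
  | OTree.node (t :: ts) => h1 t ts (treeInd P h0 h1 t) (treeInd P h0 h1 (OTree.node ts))

theorem wordFrom_add (t : OTree) : ∀ c d : ℕ, t.wordFrom (c + d) = (t.wordFrom d).map (· + c) := by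
  induction t using treeInd with
  | h0 => intro c d; rw [wordFrom, wordFrom]; rfl
  | h1 t ts iht ihts =>
      intro c d
      rw [wordFrom, wordFrom, List.map_append, List.map_cons, ← ihts c d,
        show c + d + edges (node ts) = c + (d + edges (node ts)) by omega, iht c]
      congr 2
      omega

theorem wordFrom_eq_map (t : OTree) (c : ℕ) : t.wordFrom c = t.word.map (· + c) := by
  have h := wordFrom_add t c 0
  rw [Nat.add_zero] at h
  exact h

theorem wordFrom_perm (t : OTree) : ∀ c : ℕ, t.wordFrom c ~ List.range' (c + 1) t.edges := by
  induction t using treeInd with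
  | h0 => intro c; rw [wordFrom, edges]; exact List.Perm.refl _
  | h1 t ts iht ihts =>
      intro c
      rw [wordFrom]
      refine List.perm_middle.trans ?_
      refine (List.Perm.cons _ ((iht _).append (ihts _))).trans ?_
      have h1 := List.range'_append (s := c+1) (m := (node ts).edges) (n := t.edges) (step := 1)
      simp only [one_mul, Nat.add_comm (node ts).edges t.edges] at h1
      have h2 := List.range'_concat (step := 1) (s := c+1) (n := t.edges + (node ts).edges)
      simp only [one_mul] at h2
      have hE : (node (t :: ts)).edges = t.edges + (node ts).edges + 1 := by rw [edges]; omega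
      rw [hE, h2, ← h1,
        show c + 1 + (t.edges + (node ts).edges) = c + (t.edges + (node ts).edges + 1) by omega,
        show c + 1 + (node ts).edges = c + (node ts).edges + 1 by omega]
      refine Perm.trans (List.Perm.cons _ List.perm_append_comm) ?_
      exact (List.perm_append_singleton _ _).symm

theorem length_wordFrom (t : OTree) (c : ℕ) : (t.wordFrom c).length = t.edges := by
  rw [(wordFrom_perm t c).length_eq, List.length_range']

theorem mem_wordFrom_bounds {t : OTree} {c v : ℕ} (h : v ∈ t.wordFrom c) :
    c + 1 ≤ v ∧ v ≤ c + t.edges := by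
  have := (wordFrom_perm t c).mem_iff.mp h
  rw [List.mem_range'] at this
  obtain ⟨i, hi, rfl⟩ := this
  omega

theorem word_perm (t : OTree) : t.word ~ List.range' 1 t.edges := wordFrom_perm t 0

/-- structural avoidance -/
def AvoidsL (w : List ℕ) : Prop := ∀ a b c : ℕ, [a, b, c] <+ w → ¬ (a < c ∧ c < b)

theorem AvoidsL.sublist {w w' : List ℕ} (h : w' <+ w) (hw : AvoidsL w) : AvoidsL w' :=
  fun a b c hs => hw a b c (hs.trans h)

theorem avoidsL_wordFrom (t : OTree) : ∀ c : ℕ, AvoidsL (t.wordFrom c) := by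
  induction t using treeInd with
  | h0 => intro c a b cc hs; rw [wordFrom] at hs; simp at hs
  | h1 t ts iht ihts =>
      intro c a b cc hs
      rw [wordFrom] at hs
      rintro ⟨hac, hcb⟩
      set A := t.wordFrom (c + edges (node ts)) with hA
      set B := (node ts).wordFrom c with hB
      set m := c + edges (node (t :: ts)) with hm
      have hAval : ∀ v ∈ A, c + edges (node ts) + 1 ≤ v ∧ v ≤ c + edges (node ts) + edges t :=
        fun v hv => mem_wordFrom_bounds hv
      have hBval : ∀ v ∈ B, c + 1 ≤ v ∧ v ≤ c + edges (node ts) :=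
        fun v hv => mem_wordFrom_bounds hv
      have hmval : c + edges (node ts) + edges t < m := by rw [hm, edges]; omega
      rcases List.sublist_append_iff.1 hs with ⟨l1, l2, heq, hl1, hl2⟩
      have hcases : (l1 = [] ∧ l2 = [a,b,cc]) ∨ (l1 = [a] ∧ l2 = [b,cc]) ∨
          (l1 = [a,b] ∧ l2 = [cc]) ∨ (l1 = [a,b,cc] ∧ l2 = []) := by
        rcases l1 with _ | ⟨x1, _ | ⟨x2, _ | ⟨x3, l1r⟩⟩⟩ <;>
          simp_all <;> omega
      have hBofcons : ∀ v, v ∈ l2 → l2 <+ m :: B → v = m ∨ v ∈ B := by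
        intro v hv h2
        have := h2.subset hv
        simpa using this
      rcases hcases with ⟨h1, h2⟩ | ⟨h1, h2⟩ | ⟨h1, h2⟩ | ⟨h1, h2⟩ <;> subst h1 <;> subst h2
      · -- all three in m :: B
        rcases List.sublist_cons_iff.1 hl2 with hsub | ⟨r, hr, hrsub⟩
        · exact ihts c a b cc hsub ⟨hac, hcb⟩
        · -- a = m
          obtain ⟨ha, hr'⟩ := List.cons.inj hr
          subst hr'
          have hcc : cc ∈ B := hrsub.subset (by simp)
          have := hBval cc hcc
          omega
      · -- a ∈ A, [b, cc] <+ m :: B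
        have haA : a ∈ A := hl1.subset (by simp)
        rcases List.sublist_cons_iff.1 hl2 with hsub | ⟨r, hr, hrsub⟩
        · have hcc : cc ∈ B := hsub.subset (by simp)
          have := hBval cc hcc
          have := hAval a haA
          omega
        · obtain ⟨hb, hr'⟩ := List.cons.inj hr
          subst hr'
          have hcc : cc ∈ B := hrsub.subset (by simp)
          have := hBval cc hcc
          have := hAval a haA
          omega
      · -- a b ∈ A, cc ∈ m :: B
        have haA : a ∈ A := hl1.subset (by simp)
        have hbA : b ∈ A := hl1.subset (by simp)
        have hccm : cc = m ∨ cc ∈ B := by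
          rcases List.sublist_cons_iff.1 hl2 with hsub | ⟨r, hr, _⟩
          · exact Or.inr (hsub.subset (by simp))
          · exact Or.inl (List.cons.inj hr).1
        rcases hccm with rfl | hcc
        · have := hAval b hbA
          omega
        · have := hBval cc hcc
          have := hAval a haA
          omega
      · exact iht (c + edges (node ts)) a b cc (by simpa using hl1) ⟨hac, hcb⟩


theorem levels_pos (t : OTree) : ∀ l ∈ t.levels, 1 ≤ l := by
  induction t using treeInd with
  | h0 => intro l hl; rw [levels] at hl; simp at hl
  | h1 t ts iht ihts =>
      intro l hl
      rw [levels] at hl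
      rcases Multiset.mem_add.1 hl with h | h
      · rcases Multiset.mem_cons.1 h with rfl | h
        · exact le_refl 1
        · rcases Multiset.mem_map.1 h with ⟨x, -, rfl⟩
          omega
      · exact ihts l h

theorem cntL_wordFrom (t : OTree) (c k : ℕ) :
    cntL (fun _ => True) (t.wordFrom c) k = cntL (fun _ => True) t.word k := by
  rw [wordFrom_eq_map, cntL_map_add]

theorem inc_word (t : OTree) : ∀ k : ℕ,
    cntL (fun _ => True) t.word (k + 1) = (t.levels.map fun l => (l - 1).choose k).sum := by
  induction t using treeInd with
  | h0 =>
      intro k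
      have h : (node []).word = [] := by rw [word, wordFrom]
      rw [h, cntL_nil, levels]
      simp
  | h1 t ts iht ihts =>
      intro k
      set ets := (node ts).edges with hets
      set m := edges (node (t :: ts)) with hm
      have hw : (node (t :: ts)).word = t.wordFrom ets ++ m :: (node ts).word := by
        rw [word, wordFrom, word]
        simp only [Nat.zero_add]
        rfl
      have hmbig : m = t.edges + 1 + ets := by rw [hm, edges]
      have hA : ∀ a ∈ t.wordFrom ets, a < m := by
        intro a ha
        have := mem_wordFrom_bounds ha
        omega
      have hB : ∀ b ∈ (node ts).word, b < m := by
        intro b hb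
        have := mem_wordFrom_bounds (t := node ts) (c := 0) hb
        omega
      have hAB : ∀ a ∈ t.wordFrom ets, ∀ b ∈ (node ts).word, b < a := by
        intro a ha b hb
        have h1 := mem_wordFrom_bounds ha
        have h2 := mem_wordFrom_bounds (t := node ts) (c := 0) hb
        omega
      rw [hw, keyM _ _ _ _ hA hB hAB, cntL_wordFrom, cntL_wordFrom]
      rw [levels, Multiset.map_add, Multiset.sum_add, Multiset.map_cons, Multiset.sum_cons,
        Multiset.map_map]
      rcases k with _ | k
      · rw [iht 0, ihts 0, cntL_zero]
        have h1 : (Multiset.map ((fun l => (l - 1).choose 0) ∘ (· + 1)) t.levels).sum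
            = (Multiset.map (fun l => (l - 1).choose 0) t.levels).sum := by
          apply congrArg
          apply Multiset.map_congr rfl
          intro x hx
          simp
        rw [h1]
        simp
        omega
      · rw [iht (k + 1), iht k, ihts (k + 1)]
        have hpas : ∀ x ∈ t.levels, ((fun l => (l - 1).choose (k + 1)) ∘ (· + 1)) x
            = (x - 1).choose k + (x - 1).choose (k + 1) := by
          intro x hx
          have h1 := levels_pos t x hx
          obtain ⟨y, rfl⟩ : ∃ y, x = y + 1 := ⟨x - 1, by omega⟩
          simp [Nat.choose_succ_succ]
        rw [Multiset.map_congr rfl hpas, Multiset.sum_map_add]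
        simp [Nat.choose_eq_zero_of_lt]
        omega


theorem length_word (t : OTree) : t.word.length = t.edges := length_wordFrom t 0

theorem split_unique {m : ℕ} : ∀ (A1 A2 B1 B2 : List ℕ), m ∉ A1 → m ∉ A2 →
    A1 ++ m :: B1 = A2 ++ m :: B2 → A1 = A2 ∧ B1 = B2
  | [], [], B1, B2, _, _, h => ⟨rfl, by simpa using h⟩
  | [], a :: A2, B1, B2, h1, h2, h => by
      exfalso
      obtain ⟨h3, -⟩ := List.cons.inj (by simpa using h)
      exact h2 (by simp [h3])
  | a :: A1, [], B1, B2, h1, h2, h => by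
      exfalso
      obtain ⟨h3, -⟩ := List.cons.inj (by simpa using h)
      exact h1 (by simp [h3])
  | a :: A1, b :: A2, B1, B2, h1, h2, h => by
      obtain ⟨h3, h4⟩ := List.cons.inj (by simpa using h)
      have hres := split_unique A1 A2 B1 B2 (fun hm => h1 (by simp [hm]))
        (fun hm => h2 (by simp [hm])) h4
      exact ⟨by rw [h3, hres.1], hres.2⟩

theorem word_inj_aux : ∀ n : ℕ, ∀ t1 t2 : OTree, t1.edges = n → t1.word = t2.word → t1 = t2 := by
  intro n
  induction n using Nat.strong_induction_on with
  | _ n IH =>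
    rintro ⟨l1⟩ ⟨l2⟩ hn hw
    have hlen : (OTree.node l1).edges = (OTree.node l2).edges := by
      rw [← length_word, ← length_word, hw]
    rcases l1 with _ | ⟨t, ts⟩ <;> rcases l2 with _ | ⟨s, ss⟩
    · rfl
    · exfalso; rw [edges, edges] at hlen; omega
    · exfalso; rw [edges, edges] at hlen; omega
    · have hE1 : (node (t :: ts)).edges = t.edges + 1 + (node ts).edges := by rw [edges]
      have hE2 : (node (s :: ss)).edges = s.edges + 1 + (node ss).edges := by rw [edges]
      have h1 : (node (t :: ts)).word =
          t.wordFrom (node ts).edges ++ ((node (t :: ts)).edges) :: (node ts).word := by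
        rw [word, wordFrom, word]; simp only [Nat.zero_add]
      have h2 : (node (s :: ss)).word =
          s.wordFrom (node ss).edges ++ ((node (s :: ss)).edges) :: (node ss).word := by
        rw [word, wordFrom, word]; simp only [Nat.zero_add]
      rw [h1, h2, ← hlen] at hw
      have hnot1 : (node (t :: ts)).edges ∉ t.wordFrom (node ts).edges := by
        intro hmem
        have := mem_wordFrom_bounds hmem
        omega
      have hnot2 : (node (t :: ts)).edges ∉ s.wordFrom (node ss).edges := by
        intro hmem
        have := mem_wordFrom_bounds hmem
        omega
      obtain ⟨hA, hB⟩ := split_unique _ _ _ _ hnot1 hnot2 hw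
      have hts : OTree.node ts = OTree.node ss :=
        IH (node ts).edges (by omega) (node ts) (node ss) rfl hB
      have hess : (node ss).edges = (node ts).edges := by rw [← hts]
      rw [hess] at hA
      rw [wordFrom_eq_map, wordFrom_eq_map] at hA
      have hword : t.word = s.word :=
        List.map_injective_iff.mpr (fun a b hab => by omega) hA
      have hts2 : t = s := IH t.edges (by omega) t s rfl hword
      obtain rfl := OTree.node.inj hts
      rw [hts2]

theorem word_surj : ∀ n : ℕ, ∀ w : List ℕ, w ~ List.range' 1 n → AvoidsL w →
    ∃ t : OTree, t.word = w ∧ t.edges = n := by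
  intro n
  induction n using Nat.strong_induction_on with
  | _ n IH =>
    intro w hperm havoid
    rcases n with _ | n
    · have hw0 : w = [] := by
        have : w ~ [] := by simpa using hperm
        exact this.eq_nil
      exact ⟨OTree.node [], by rw [hw0, word, wordFrom], by rw [edges]⟩
    · have hmem : (n + 1) ∈ w := hperm.mem_iff.mpr
        (by rw [List.mem_range']; exact ⟨n, by omega, by omega⟩)
      obtain ⟨A, B, rfl⟩ := List.append_of_mem hmem
      have hnodup : (A ++ (n + 1) :: B).Nodup := hperm.symm.nodup (List.nodup_range' (s := 1) (n := n + 1))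
      obtain ⟨hAnd, hcons, hdisj⟩ := List.nodup_append.1 hnodup
      obtain ⟨hnB, hBnd⟩ := List.nodup_cons.1 hcons
      have hnA : (n + 1) ∉ A := fun h => hdisj _ h _ (by simp) rfl
      have hmemw : ∀ v ∈ A ++ (n + 1) :: B, 1 ≤ v ∧ v ≤ n + 1 := by
        intro v hv
        have := hperm.subset hv
        rw [List.mem_range'] at this
        obtain ⟨i, hi, rfl⟩ := this
        omega
      have hcross : ∀ a ∈ A, ∀ b ∈ B, b < a := by
        intro a ha b hb
        by_contra hab
        push_neg at hab
        have hne : a ≠ b := fun h => hdisj _ ha _ (by simp [hb]) h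
        have h3 : [a, n + 1, b] <+ A ++ (n + 1) :: B :=
          List.Sublist.append (List.singleton_sublist.2 ha)
            (List.Sublist.cons₂ _ (List.singleton_sublist.2 hb))
        have hbb : b ≤ n + 1 := (hmemw b (by simp [hb])).2
        have hbn : b ≠ n + 1 := fun h => hnB (h ▸ hb)
        exact havoid a (n + 1) b h3 ⟨by omega, by omega⟩
      have hpAB : (A ++ B) ~ List.range' 1 n := by
        have p1 := List.perm_middle (a := n + 1) (l₁ := A) (l₂ := B)
        have p2 : List.range' 1 (n + 1) ~ (n + 1) :: List.range' 1 n := by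
          rw [show List.range' 1 (n + 1) = List.range' 1 n ++ [1 + n] from
            by simpa using List.range'_concat (step := 1) (s := 1) (n := n),
            show 1 + n = n + 1 by omega]
          exact List.perm_append_singleton _ _
        exact ((p1.symm.trans hperm).trans p2).cons_inv
      set b := B.length with hb
      have hlenAB : A.length + B.length = n := by
        have := hpAB.length_eq
        simpa using this
      have hble : ∀ y ∈ B, y ≤ b := by
        intro y hy
        by_contra hyb
        push_neg at hyb
        have hyn : y ≤ n := by
          have h1 := (hmemw y (by simp [hy])).2
          have h2 : y ≠ n + 1 := fun h => hnB (h ▸ hy)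
          omega
        have hzB : ∀ z ∈ List.range' 1 y, z ∈ B := by
          intro z hz
          rw [List.mem_range'] at hz
          obtain ⟨i, hi, hzi⟩ := hz
          have hzw : z ∈ A ++ B := hpAB.mem_iff.mpr
            (by rw [List.mem_range']; exact ⟨z - 1, by omega, by omega⟩)
          rcases List.mem_append.1 hzw with hzA | hzB
          · have := hcross _ hzA y hy; omega
          · exact hzB
        have hsp : List.range' 1 y <+~ B :=
          List.subperm_of_subset (List.nodup_range' (s := 1) (n := y)) hzB
        have := hsp.length_le
        rw [List.length_range'] at this
        omega
      have hBperm : B ~ List.range' 1 b := by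
        have hsub : B ⊆ List.range' 1 b := by
          intro y hy
          rw [List.mem_range']
          have h1 := hble y hy
          have h2 := (hmemw y (by simp [hy])).1
          exact ⟨y - 1, by omega, by omega⟩
        have hsp : B <+~ List.range' 1 b := List.subperm_of_subset hBnd hsub
        exact hsp.perm_of_length_le (by rw [List.length_range'])
      have hbn : b ≤ n := by omega
      have hAperm : A ~ List.range' (b + 1) (n - b) := by
        have p3 : (A ++ B) ~ (A ++ List.range' 1 b) := List.Perm.append_left A hBperm
        have p4 : List.range' 1 b ++ List.range' (b + 1) (n - b) = List.range' 1 n := by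
          have h := List.range'_append (s := 1) (m := b) (n := n - b) (step := 1)
          simp only [one_mul] at h
          rw [show 1 + b = b + 1 by omega] at h
          rw [show b + (n - b) = n by omega] at h
          exact h
        have p5 : (A ++ List.range' 1 b) ~ (List.range' (b + 1) (n - b) ++ List.range' 1 b) := by
          refine (p3.symm.trans hpAB).trans ?_
          rw [← p4]
          exact List.perm_append_comm
        exact (List.perm_append_right_iff _).1 p5
      have hAmem : ∀ a ∈ A, b + 1 ≤ a ∧ a ≤ n := by
        intro a ha
        have := hAperm.subset ha
        rw [List.mem_range'] at this
        obtain ⟨i, hi, rfl⟩ := this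
        omega
      -- shifted A
      have hA'perm : A.map (· - b) ~ List.range' 1 (n - b) := by
        refine (hAperm.map (· - b)).trans ?_
        have hmr : (List.range' (b + 1) (n - b)).map (· - b) = List.range' 1 (n - b) := by
          apply List.ext_getElem
          · simp
          · intro i h1 h2
            simp only [List.getElem_map, List.getElem_range'_1]
            omega
        rw [hmr]
      have hA'avoid : AvoidsL (A.map (· - b)) := by
        intro x y z hs
        rcases List.sublist_map_iff.1 hs with ⟨l', hl', heq⟩
        have hlen3 : l'.length = 3 := by
          have := congrArg List.length heq
          simpa using this.symm
        rcases l' with _ | ⟨x', _ | ⟨y', _ | ⟨z', _ | ⟨u', r⟩⟩⟩⟩ <;> simp at hlen3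
        simp only [List.map_cons, List.map_nil, List.cons.injEq, and_true] at heq
        obtain ⟨rfl, rfl, rfl⟩ := heq
        have hx' := hAmem x' (hl'.subset (by simp))
        have hy' := hAmem y' (hl'.subset (by simp))
        have hz' := hAmem z' (hl'.subset (by simp))
        have := havoid x' y' z' (hl'.trans (List.sublist_append_left _ _))
        rintro ⟨c1, c2⟩
        exact this ⟨by omega, by omega⟩
      obtain ⟨tA, htAw, htAe⟩ := IH (n - b) (by omega) (A.map (· - b)) hA'perm hA'avoid
      have hBavoid : AvoidsL B :=
        AvoidsL.sublist ((List.sublist_cons_self _ _).trans (List.sublist_append_right _ _)) havoid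
      obtain ⟨tB, htBw, htBe⟩ := IH b (by omega) B hBperm hBavoid
      obtain ⟨ls⟩ := tB
      refine ⟨OTree.node (tA :: ls), ?_, ?_⟩
      · have hw1 : (node (tA :: ls)).word =
            tA.wordFrom (node ls).edges ++ ((node (tA :: ls)).edges) :: (node ls).word := by
          rw [word, wordFrom, word]; simp only [Nat.zero_add]
        rw [hw1, htBe, htBw, wordFrom_eq_map, htAw]
        congr 1
        · rw [List.map_map]
          have hmm : A.map ((· + b) ∘ (· - b)) = A.map id :=
            List.map_congr_left (fun a ha => by have := hAmem a ha; simp; omega)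
          rw [hmm, List.map_id]
        · congr 1
          rw [edges, htAe, htBe]
          omega
      · rw [edges, htAe, htBe]
        omega


theorem perm_word_length {n : ℕ} {w : List ℕ} (hw : w ~ List.range' 1 n) : w.length = n := by
  rw [hw.length_eq, List.length_range']

theorem perm_word_mem {n : ℕ} {w : List ℕ} (hw : w ~ List.range' 1 n) {v : ℕ} (h : v ∈ w) :
    1 ≤ v ∧ v ≤ n := by
  have := hw.subset h
  rw [List.mem_range'] at this
  obtain ⟨i, hi, rfl⟩ := this
  omega

noncomputable def permOfList (n : ℕ) (w : List ℕ) (hw : w ~ List.range' 1 n) :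
    Equiv.Perm (Fin n) :=
  Equiv.ofBijective
    (fun i => (⟨w.get ⟨i.1, by rw [perm_word_length hw]; exact i.2⟩ - 1, by
      have hm : w.get ⟨i.1, by rw [perm_word_length hw]; exact i.2⟩ ∈ w := List.get_mem _ _
      have := perm_word_mem hw hm
      omega⟩ : Fin n))
    (Finite.injective_iff_bijective.1 (by
      intro i j hij
      have hnd : w.Nodup := hw.symm.nodup (List.nodup_range' (s := 1) (n := n))
      have h1 : w.get ⟨i.1, by rw [perm_word_length hw]; exact i.2⟩ ∈ w := List.get_mem _ _
      have h2 : w.get ⟨j.1, by rw [perm_word_length hw]; exact j.2⟩ ∈ w := List.get_mem _ _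
      have b1 := perm_word_mem hw h1
      have b2 := perm_word_mem hw h2
      have hval : (w.get ⟨i.1, _⟩ : ℕ) - 1 = w.get ⟨j.1, _⟩ - 1 := congrArg Fin.val hij
      have heq : w.get ⟨i.1, by rw [perm_word_length hw]; exact i.2⟩
          = w.get ⟨j.1, by rw [perm_word_length hw]; exact j.2⟩ := by omega
      have := (hnd.get_inj_iff).1 heq
      exact Fin.ext (by simpa using congrArg Fin.val this)))

theorem permOfList_apply_val (n : ℕ) (w : List ℕ) (hw : w ~ List.range' 1 n) (i : Fin n) :
    (permOfList n w hw i : ℕ) = w.get ⟨i.1, by rw [perm_word_length hw]; exact i.2⟩ - 1 := rfl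

def wordOfPerm {n : ℕ} (π : Equiv.Perm (Fin n)) : List ℕ := List.ofFn (fun i => (π i : ℕ) + 1)

theorem length_wordOfPerm {n : ℕ} (π : Equiv.Perm (Fin n)) : (wordOfPerm π).length = n := by
  simp [wordOfPerm]

theorem getElem_wordOfPerm {n : ℕ} (π : Equiv.Perm (Fin n)) (m : ℕ)
    (h : m < (wordOfPerm π).length) :
    (wordOfPerm π)[m] = (π ⟨m, by rw [← length_wordOfPerm π]; exact h⟩ : ℕ) + 1 := by
  simp [wordOfPerm]

theorem wordOfPerm_permOfList (n : ℕ) (w : List ℕ) (hw : w ~ List.range' 1 n) :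
    wordOfPerm (permOfList n w hw) = w := by
  have hl := perm_word_length hw
  apply List.ext_getElem
  · rw [length_wordOfPerm, hl]
  · intro m h1 h2
    rw [getElem_wordOfPerm]
    have hval := permOfList_apply_val n w hw ⟨m, by omega⟩
    have hm : w.get ⟨m, h2⟩ ∈ w := List.get_mem _ _
    have := perm_word_mem hw hm
    simp only [List.get_eq_getElem] at hval this ⊢
    omega

theorem wordOfPerm_inj {n : ℕ} {π₁ π₂ : Equiv.Perm (Fin n)}
    (h : wordOfPerm π₁ = wordOfPerm π₂) : π₁ = π₂ := by
  apply Equiv.ext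
  intro i
  have h1 := getElem_wordOfPerm π₁ i.1 (by rw [length_wordOfPerm]; exact i.2)
  have h2 := getElem_wordOfPerm π₂ i.1 (by rw [length_wordOfPerm]; exact i.2)
  have h12 : (wordOfPerm π₁)[i.1]'(by rw [length_wordOfPerm]; exact i.2)
      = (wordOfPerm π₂)[i.1]'(by rw [length_wordOfPerm]; exact i.2) := by
    congr 1
  have hv : (π₁ ⟨i.1, i.2⟩ : ℕ) = (π₂ ⟨i.1, i.2⟩ : ℕ) := by omega
  exact Fin.ext (by simpa using hv)

theorem pair_sublist (w : List ℕ) : ∀ (j k : ℕ) (hjk : j < k) (hk : k < w.length),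
    [w[j]'(by omega), w[k]'hk] <+ w := by
  induction w with
  | nil => intro j k _ hk; simp at hk
  | cons x w ih =>
      intro j k hjk hk
      rcases j with _ | j
      · rcases k with _ | k
        · omega
        · simp only [List.getElem_cons_zero, List.getElem_cons_succ]
          exact List.Sublist.cons₂ _ (List.singleton_sublist.2 (List.getElem_mem _))
      · rcases k with _ | k
        · omega
        · simp only [List.getElem_cons_succ]
          exact (ih j k (by omega) (by simpa using hk)).cons _

theorem triple_sublist (w : List ℕ) : ∀ (i j k : ℕ) (hij : i < j) (hjk : j < k)
    (hk : k < w.length), [w[i]'(by omega), w[j]'(by omega), w[k]'hk] <+ w := by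
  induction w with
  | nil => intro i j k _ _ hk; simp at hk
  | cons x w ih =>
      intro i j k hij hjk hk
      rcases i with _ | i
      · rcases j with _ | j
        · omega
        · rcases k with _ | k
          · omega
          · simp only [List.getElem_cons_zero, List.getElem_cons_succ]
            exact List.Sublist.cons₂ _ (pair_sublist w j k (by omega) (by simpa using hk))
      · rcases j with _ | j
        · omega
        · rcases k with _ | k
          · omega
          · simp only [List.getElem_cons_succ]
            exact (ih i j k (by omega) (by omega) (by simpa using hk)).cons _

theorem avoids_perm_of_avoidsL {n : ℕ} {w : List ℕ} (hw : w ~ List.range' 1 n)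
    (h : AvoidsL w) : Avoids132P (permOfList n w hw) := by
  rintro ⟨i, j, kk, hij, hjk, h1, h2⟩
  have hl := perm_word_length hw
  have vi := permOfList_apply_val n w hw i
  have vj := permOfList_apply_val n w hw j
  have vk := permOfList_apply_val n w hw kk
  have bi := perm_word_mem hw (List.get_mem w ⟨i.1, by omega⟩)
  have bj := perm_word_mem hw (List.get_mem w ⟨j.1, by omega⟩)
  have bk := perm_word_mem hw (List.get_mem w ⟨kk.1, by omega⟩)
  have hs := triple_sublist w i.1 j.1 kk.1 hij hjk (by omega)
  refine h _ _ _ hs ⟨?_, ?_⟩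
  · have := Fin.lt_def.1 h1
    have e1 : w.get ⟨i.1, by omega⟩ = w[i.1]'(by omega) := rfl
    have e2 : w.get ⟨kk.1, by omega⟩ = w[kk.1]'(by omega) := rfl
    omega
  · have := Fin.lt_def.1 h2
    have e1 : w.get ⟨j.1, by omega⟩ = w[j.1]'(by omega) := rfl
    have e2 : w.get ⟨kk.1, by omega⟩ = w[kk.1]'(by omega) := rfl
    omega

theorem avoidsL_wordOfPerm {n : ℕ} (π : Equiv.Perm (Fin n)) (h : Avoids132P π) :
    AvoidsL (wordOfPerm π) := by
  intro a b c hs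
  rintro ⟨h1, h2⟩
  rcases List.sublist_iff_exists_fin_orderEmbedding_get_eq.1 hs with ⟨f, hf⟩
  have ha := hf ⟨0, by simp⟩
  have hb := hf ⟨1, by simp⟩
  have hc := hf ⟨2, by simp⟩
  have hlen : (wordOfPerm π).length = n := length_wordOfPerm π
  set i0 := f ⟨0, by simp⟩ with hi0
  set j0 := f ⟨1, by simp⟩ with hj0
  set k0 := f ⟨2, by simp⟩ with hk0
  have hij : i0 < j0 := f.strictMono (by simp [Fin.lt_def])
  have hjk : j0 < k0 := f.strictMono (by simp [Fin.lt_def])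
  have ga := getElem_wordOfPerm π i0.1 i0.2
  have gb := getElem_wordOfPerm π j0.1 j0.2
  have gc := getElem_wordOfPerm π k0.1 k0.2
  have ea : a = (wordOfPerm π)[i0.1]'i0.2 := ha
  have eb : b = (wordOfPerm π)[j0.1]'j0.2 := hb
  have ec : c = (wordOfPerm π)[k0.1]'k0.2 := hc
  apply h
  refine ⟨⟨i0.1, by omega⟩, ⟨j0.1, by omega⟩, ⟨k0.1, by omega⟩, ?_, ?_, ?_, ?_⟩
  · exact Fin.mk_lt_mk.2 (Fin.lt_def.1 hij)
  · exact Fin.mk_lt_mk.2 (Fin.lt_def.1 hjk)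
  · rw [Fin.lt_def]; omega
  · rw [Fin.lt_def]; omega


theorem incCountP_eq_cntF {n : ℕ} (π : Equiv.Perm (Fin n)) (k : ℕ) :
    incCountP π k = cntF (fun _ => True) (wordOfPerm π) k := by
  classical
  rw [incCountP, cntF]
  have hlen : (wordOfPerm π).length = n := length_wordOfPerm π
  have hget : ∀ i : Fin (wordOfPerm π).length,
      (wordOfPerm π).get i = (π ⟨i.1, by omega⟩ : ℕ) + 1 := by
    intro i
    have := getElem_wordOfPerm π i.1 i.2
    simpa [List.get_eq_getElem] using this
  apply Finset.card_nbij' (i := fun S => S.map (finCongr hlen.symm).toEmbedding)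
    (j := fun S => S.map (finCongr hlen).toEmbedding)
  · intro S hS
    simp only [Finset.mem_coe, Finset.mem_filter, Finset.mem_univ, true_and] at hS ⊢
    obtain ⟨hc, hinc⟩ := hS
    refine ⟨by rw [Finset.card_map]; exact hc, ?_, fun _ _ => trivial⟩
    intro i hi j hj hij
    rcases Finset.mem_map.1 hi with ⟨a, ha, rfl⟩
    rcases Finset.mem_map.1 hj with ⟨b, hb, rfl⟩
    have hab : a < b := by
      have := Fin.lt_def.1 hij
      exact Fin.lt_def.2 (by simpa using this)
    have hord := hinc a ha b hb hab
    rw [hget, hget]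
    exact Nat.add_lt_add_right (Fin.lt_def.1 hord) 1
  · intro S hS
    simp only [Finset.mem_coe, Finset.mem_filter, Finset.mem_univ, true_and] at hS ⊢
    obtain ⟨hc, hinc, -⟩ := hS
    refine ⟨by rw [Finset.card_map]; exact hc, ?_⟩
    intro i hi j hj hij
    rcases Finset.mem_map.1 hi with ⟨a, ha, rfl⟩
    rcases Finset.mem_map.1 hj with ⟨b, hb, rfl⟩
    have hab : a < b := by
      have := Fin.lt_def.1 hij
      exact Fin.lt_def.2 (by simpa using this)
    have hord := hinc a ha b hb hab
    rw [hget, hget] at hord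
    exact Fin.lt_def.2 (Nat.lt_of_add_lt_add_right hord)
  · intro S hS
    ext x
    simp [Fin.ext_iff]
  · intro S hS
    ext x
    simp [Fin.ext_iff]

theorem avoidsL_word (t : OTree) : AvoidsL t.word := avoidsL_wordFrom t 0

noncomputable def G (n r k : ℕ) :
    {T : OTree // T.edges = n ∧ (T.levels.map fun l => (l - 1).choose k).sum = r} →
    {π : Equiv.Perm (Fin n) // Avoids132P π ∧ incCountP π (k + 1) = r} := fun T =>
  have hperm : T.1.word ~ List.range' 1 n := by
    have h := word_perm T.1
    rwa [T.2.1] at h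
  ⟨permOfList n T.1.word hperm, by
    constructor
    · exact avoids_perm_of_avoidsL hperm (avoidsL_word T.1)
    · rw [incCountP_eq_cntF, wordOfPerm_permOfList, cntF_eq_cntL, inc_word, T.2.2]⟩

theorem G_bijective (n r k : ℕ) : Function.Bijective (G n r k) := by
  constructor
  · rintro ⟨T1, h1⟩ ⟨T2, h2⟩ heq
    have hw : T1.word = T2.word := by
      have h := congrArg (fun x => wordOfPerm x.val) heq
      simpa [G, wordOfPerm_permOfList] using h
    exact Subtype.ext (word_inj_aux T1.edges T1 T2 rfl hw)
  · rintro ⟨π, hav, hcnt⟩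
    have hwp : wordOfPerm π ~ List.range' 1 n := by
      have hnd : (wordOfPerm π).Nodup := by
        rw [wordOfPerm, List.nodup_ofFn]
        intro i j hij
        simp only at hij
        exact π.injective (Fin.ext (by omega))
      have hsub : wordOfPerm π ⊆ List.range' 1 n := by
        intro v hv
        rw [wordOfPerm, List.mem_ofFn] at hv
        obtain ⟨i, rfl⟩ := hv
        rw [List.mem_range']
        refine ⟨(π i : ℕ), (π i).2, ?_⟩
        show (π i : ℕ) + 1 = 1 + 1 * (π i : ℕ)
        omega
      have hsp := List.subperm_of_subset hnd hsub
      exact hsp.perm_of_length_le (by rw [List.length_range', length_wordOfPerm])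
    obtain ⟨T, hTw, hTe⟩ := word_surj n (wordOfPerm π) hwp (avoidsL_wordOfPerm π hav)
    have hstat : (T.levels.map fun l => (l - 1).choose k).sum = r := by
      rw [← inc_word, ← cntF_eq_cntL, hTw, ← incCountP_eq_cntF, hcnt]
    refine ⟨⟨T, hTe, hstat⟩, ?_⟩
    apply Subtype.ext
    apply wordOfPerm_inj
    simp only [G, wordOfPerm_permOfList]
    exact hTw

end S13

/-- For all `n` and `r` (and `k ≥ 1`), the number of
132-avoiding permutations of length `n` with exactly `r` increasing patterns
of length `k` equals the number of ordered trees with `n` edges such that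
`∑_{nonroot v} C(level(v)-1, k-1) = r`. -/
theorem stmt13 (n r k : ℕ) (hk : 1 ≤ k) :
    Nat.card {π : Equiv.Perm (Fin n) // Avoids132P π ∧ incCountP π k = r} =
      Nat.card {T : OTree //
        T.edges = n ∧ (T.levels.map fun l => (l - 1).choose (k - 1)).sum = r} := by
  obtain ⟨k, rfl⟩ : ∃ k', k = k' + 1 := ⟨k - 1, by omega⟩
  symm
  have hkk : k + 1 - 1 = k := rfl
  exact Nat.card_eq_of_bijective (S13.G n r k) (S13.G_bijective n r k)
end
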